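/- arXiv:2601.06760 — 10 statements merged into one kernel-verified Lean document; each statement's English description precedes it below -/
import Mathlib

section
/- If F is an NBUE life distribution with finite mean μ > 0, then for all x ≥ 0, ∫_x^∞ (1 - F(t)) dt ≤ μ·exp(-x/μ). -/
/-!
Let `G u = ∫_u^∞ (1 - F)`. For `u < z`, monotonicity of `F` and the NBUE bound at `z` give
`G z - G u = -∫_u^z (1 - F) ≤ -(z - u) (1 - F z) ≤ -(z - u) G z / μ`,
a difference form of `G' ≤ -G / μ`, so Grönwall yields `G x ≤ G 0 e^{-x/μ} = μ e^{-x/μ}`.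
-/

open MeasureTheory Set Filter Topology

theorem le_mul_exp_of_forall_sub_le {G : ℝ → ℝ} {K a b : ℝ} (hab : a ≤ b)
    (hG : ContinuousOn G (Icc a b))
    (hstep : ∀ u ∈ Ico a b, ∀ z ∈ Ioo u b, G z - G u ≤ K * (z - u) * G z) :
    G b ≤ G a * Real.exp (K * (b - a)) := by
  have hslope : ∀ u ∈ Ico a b, ∀ r, K * G u < r →
      ∃ᶠ z in 𝓝[>] u, (z - u)⁻¹ * (G z - G u) < r := by
    -- the slope over `[u, z]` is at most `K * G z`, which tends to `K * G u` as `z ↓ u`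
    intro u hu r hr
    have hIoo : Ioo u b ∈ 𝓝[>] u := Ioo_mem_nhdsGT hu.2
    have hGu : Tendsto G (𝓝[>] u) (𝓝 (G u)) :=
      (hG u (Ico_subset_Icc_self hu)).mono_left
        (nhdsWithin_le_of_mem (mem_of_superset hIoo (Ioo_subset_Icc_self.trans
          (Icc_subset_Icc_left hu.1))))
    have hlt : ∀ᶠ z in 𝓝[>] u, K * G z < r := (hGu.const_mul K).eventually (gt_mem_nhds hr)
    refine (hlt.and hIoo).mono (fun z ⟨hzr, hz⟩ => ?_) |>.frequently
    have hzu : 0 < z - u := sub_pos.2 hz.1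
    calc (z - u)⁻¹ * (G z - G u) ≤ (z - u)⁻¹ * (K * (z - u) * G z) :=
          mul_le_mul_of_nonneg_left (hstep u hu z hz) (inv_nonneg.2 hzu.le)
      _ = K * G z := by field_simp
      _ < r := hzr
  have h := le_gronwallBound_of_liminf_deriv_right_le hG hslope le_rfl
    (fun _ _ => (add_zero _).ge) b ⟨hab, le_rfl⟩
  rwa [gronwallBound_ε0] at h

section Antitone

variable {g : ℝ → ℝ}

theorem Antitone.mul_le_intervalIntegral (hg : Antitone g) {u z : ℝ} (huz : u ≤ z) :
    (z - u) * g z ≤ ∫ t in u..z, g t := by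
  have h := intervalIntegral.integral_mono_on huz intervalIntegrable_const
    (hg.intervalIntegrable (μ := volume)) (fun t ht => hg ht.2)
  simpa using h

theorem Antitone.continuous_integral_Ioi (hg : Antitone g) {a : ℝ}
    (hint : IntegrableOn g (Ioi a)) : Continuous fun u => ∫ t in Ioi u, g t := by
  have hprim := intervalIntegral.continuous_primitive
    (fun _ _ => hg.intervalIntegrable (μ := volume)) a
  refine ((continuous_const (y := ∫ t in Ioi a, g t)).sub hprim).congr fun u => ?_
  show (∫ t in Ioi a, g t) - ∫ t in a..u, g t = ∫ t in Ioi u, g t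
  rw [← intervalIntegral.integral_interval_add_Ioi'
    (hg.intervalIntegrable (a := u) (b := a)) hint, intervalIntegral.integral_symm a u]
  ring

theorem Antitone.integral_Ioi_eq_zero (hg : Antitone g) (hg0 : ∀ s, 0 ≤ g s) {t : ℝ}
    (ht : g t ≤ 0) : ∫ s in Ioi t, g s = 0 :=
  setIntegral_eq_zero_of_forall_eq_zero fun s hs => le_antisymm ((hg hs.le).trans ht) (hg0 s)

theorem Antitone.integral_Ioi_le_mul_exp (hg : Antitone g) {a μ : ℝ} (hμ : 0 < μ)
    (hint : IntegrableOn g (Ioi a)) (hNBUE : ∀ t ≥ a, ∫ s in Ioi t, g s ≤ μ * g t)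
    {x : ℝ} (hx : a ≤ x) :
    ∫ t in Ioi x, g t ≤ (∫ t in Ioi a, g t) * Real.exp (-(x - a) / μ) := by
  set G : ℝ → ℝ := fun u => ∫ t in Ioi u, g t
  have hstep : ∀ u ∈ Ico a x, ∀ z ∈ Ioo u x, G z - G u ≤ -μ⁻¹ * (z - u) * G z := by
    intro u hu z hz
    have hdiff : G z - G u = -∫ t in u..z, g t := by
      rw [← intervalIntegral.integral_Ioi_sub_Ioi (hint.mono_set (Ioi_subset_Ioi hu.1))
        hz.1.le]
      ring
    have hGz : μ⁻¹ * G z ≤ g z := by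
      rw [inv_mul_le_iff₀ hμ]
      exact hNBUE z (hu.1.trans hz.1.le)
    have hlow := hg.mul_le_intervalIntegral hz.1.le
    have hscaled := mul_le_mul_of_nonneg_left hGz (sub_nonneg.2 hz.1.le)
    rw [hdiff]
    linarith
  have h := le_mul_exp_of_forall_sub_le hx (hg.continuous_integral_Ioi hint).continuousOn hstep
  rwa [show -μ⁻¹ * (x - a) = -(x - a) / μ by ring] at h

end Antitone

theorem nbue_survival_integral_le_exp_general
    (F : ℝ → ℝ) (μ : ℝ) (hμ : 0 < μ)
    (hmono : Monotone F)
    (hlim : Tendsto F atTop (nhds 1))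
    (hint : IntegrableOn (fun t => 1 - F t) (Ioi 0))
    (hmean : ∫ t in Ioi (0:ℝ), (1 - F t) = μ)
    (hNBUE : ∀ t ≥ (0:ℝ), 0 < 1 - F t →
      ∫ x in Ioi t, (1 - F x) ≤ μ * (1 - F t)) :
    ∀ x ≥ (0:ℝ), ∫ t in Ioi x, (1 - F t) ≤ μ * Real.exp (-x / μ) := by
  intro x hx
  have hsurv_nonneg : ∀ t, 0 ≤ 1 - F t := fun t => sub_nonneg.2 (hmono.ge_of_tendsto hlim t)
  have hanti : Antitone fun t => 1 - F t := fun s t hst => sub_le_sub_left (hmono hst) 1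
  have hNBUE' : ∀ t ≥ (0:ℝ), ∫ s in Ioi t, (1 - F s) ≤ μ * (1 - F t) := by
    intro t ht
    rcases (hsurv_nonneg t).lt_or_eq with hpos | hzero
    · exact hNBUE t ht hpos
    · rw [hanti.integral_Ioi_eq_zero hsurv_nonneg hzero.ge, ← hzero, mul_zero]
  simpa [hmean] using hanti.integral_Ioi_le_mul_exp hμ hint hNBUE' hx

/-- Marshall–Proschan: if `F` is an NBUE life distribution with finite mean `μ > 0`,
then `∫_x^∞ (1 - F t) dt ≤ μ * exp (-x/μ)` for all `x ≥ 0`. -/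
theorem nbue_survival_integral_le_exp
    (F : ℝ → ℝ) (μ : ℝ) (hμ : 0 < μ)
    (hmono : Monotone F) (hneg : ∀ t < (0:ℝ), F t = 0)
    (hlim : Tendsto F atTop (nhds 1))
    (hint : IntegrableOn (fun t => 1 - F t) (Ioi 0))
    (hmean : ∫ t in Ioi (0:ℝ), (1 - F t) = μ)
    (hNBUE : ∀ t ≥ (0:ℝ), 0 < 1 - F t →
      ∫ x in Ioi t, (1 - F x) ≤ μ * (1 - F t)) :
    ∀ x ≥ (0:ℝ), ∫ t in Ioi x, (1 - F t) ≤ μ * Real.exp (-x / μ) :=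
  nbue_survival_integral_le_exp_general F μ hμ hmono hlim hint hmean hNBUE
end

section
/- If X is a nonnegative random variable with NBUE distribution F and mean μ > 0, then for every r with 0 < r < 1, E[X^r] ≥ Γ(r+1)·μ^r. -/
open MeasureTheory Set Filter
open scoped ENNReal Topology

/-!
Write `H t = ∫_t^∞ F̄` for the integrated tail. NBUE says `H ≤ μ F̄ = -μ H'`, so `H` decays at
least as fast as for the exponential law of mean `μ`: `H t ≤ μ e^{-t/μ}`. Derivatives are avoided by
iterating `H (t + s) (1 + s/μ) ≤ H t` along `n` steps of length `t/n` and letting `n → ∞`.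
Since `H 0 = μ`, this says `∫_0^s F̄ ≥ ∫_0^s e^{-t/μ}` for every `s`. Finally
`E[X^r] = r ∫ t^{r-1} F̄(t) dt`, and for `r < 1` the weight `t^{r-1}` is decreasing, so the
domination of the cumulative integrals gives `E[X^r] ≥ r ∫ t^{r-1} e^{-t/μ} dt = Γ(r+1) μ^r`.
-/

lemma le_mul_exp_neg_of_mul_one_add_le {H : ℝ → ℝ} {c : ℝ} (hc : 0 ≤ c)
    (hH : ∀ t s, 0 ≤ t → 0 ≤ s → H (t + s) * (1 + c * s) ≤ H t) {t : ℝ} (ht : 0 ≤ t) :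
    H t ≤ H 0 * Real.exp (-(c * t)) := by
  have hpow (d : ℝ) (hd : 0 ≤ d) (k : ℕ) : H (k * d) * (1 + c * d) ^ k ≤ H 0 := by
    induction k with
    | zero => simp
    | succ k ih =>
      calc H ((k + 1 : ℕ) * d) * (1 + c * d) ^ (k + 1)
          = H (k * d + d) * (1 + c * d) * (1 + c * d) ^ k := by
            rw [show ((k + 1 : ℕ) : ℝ) * d = k * d + d by push_cast; ring, pow_succ]; ring
        _ ≤ H (k * d) * (1 + c * d) ^ k := by gcongr; exact hH _ _ (by positivity) hd
        _ ≤ H 0 := ih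
  have hlim : Tendsto (fun n : ℕ => H t * (1 + c * t / n) ^ n) atTop
      (𝓝 (H t * Real.exp (c * t))) :=
    (Real.tendsto_one_add_div_pow_exp (c * t)).const_mul _
  have hle : H t * Real.exp (c * t) ≤ H 0 := by
    refine le_of_tendsto hlim ((eventually_ne_atTop 0).mono fun n hn => ?_)
    simpa [mul_div_assoc, mul_div_cancel₀ t (Nat.cast_ne_zero.2 hn)] using
      hpow (t / n) (by positivity) n
  rwa [Real.exp_neg, ← div_eq_mul_inv, le_div_iff₀ (Real.exp_pos _)]

section TailIntegral

variable {g : ℝ → ℝ} {μ s t : ℝ}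

lemma setIntegral_Ioi_add_mul_le_of_nbue (hg0 : ∀ x, 0 ≤ g x) (hg : IntegrableOn g (Ioi 0))
    (hμ : 0 < μ) (hnbue : ∀ x ≥ 0, ∫ y in Ioi x, g y ≤ μ * g x) (ht : 0 ≤ t) (hs : 0 ≤ s) :
    (∫ y in Ioi (t + s), g y) * (1 + μ⁻¹ * s) ≤ ∫ y in Ioi t, g y := by
  have hgt : IntegrableOn g (Ioi t) := hg.mono_set (Ioi_subset_Ioi ht)
  have hgts : IntegrableOn g (Ioi (t + s)) := hg.mono_set (Ioi_subset_Ioi (by linarith))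
  have hlow : ∀ x ∈ Icc t (t + s), μ⁻¹ * ∫ y in Ioi (t + s), g y ≤ g x := fun x hx => by
    rw [inv_mul_le_iff₀ hμ]
    calc ∫ y in Ioi (t + s), g y ≤ ∫ y in Ioi x, g y :=
          setIntegral_mono_set (hg.mono_set (Ioi_subset_Ioi (ht.trans hx.1)))
            (.of_forall hg0) (Ioi_subset_Ioi hx.2).eventuallyLE
      _ ≤ μ * g x := hnbue x (ht.trans hx.1)
  have hmass := intervalIntegral.integral_mono_on (by linarith) intervalIntegrable_const
    ((intervalIntegrable_iff_integrableOn_Ioc_of_le (by linarith)).2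
      (hgt.mono_set Ioc_subset_Ioi_self)) hlow
  rw [intervalIntegral.integral_const, smul_eq_mul, add_sub_cancel_left] at hmass
  rw [← intervalIntegral.integral_interval_add_Ioi hgt hgts]
  linarith

lemma setIntegral_Ioi_le_mul_exp_of_nbue (hg0 : ∀ x, 0 ≤ g x) (hg : IntegrableOn g (Ioi 0))
    (hμ : 0 < μ) (hnbue : ∀ x ≥ 0, ∫ y in Ioi x, g y ≤ μ * g x) (ht : 0 ≤ t) :
    ∫ y in Ioi t, g y ≤ (∫ y in Ioi 0, g y) * Real.exp (-(μ⁻¹ * t)) :=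
  le_mul_exp_neg_of_mul_one_add_le (H := fun t => ∫ y in Ioi t, g y) (inv_nonneg.2 hμ.le)
    (fun _ _ ht hs => setIntegral_Ioi_add_mul_le_of_nbue hg0 hg hμ hnbue ht hs) ht

lemma intervalIntegral_exp_neg_mul (c s : ℝ) (hc : c ≠ 0) :
    ∫ x in (0:ℝ)..s, Real.exp (-(c * x)) = (1 - Real.exp (-(c * s))) / c := by
  rw [intervalIntegral.integral_comp_mul_left (fun y => Real.exp (-y)) hc,
    intervalIntegral.integral_comp_neg, integral_exp]
  simp only [mul_zero, neg_zero, Real.exp_zero, smul_eq_mul]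
  field_simp

lemma intervalIntegral_exp_le_of_nbue (hg0 : ∀ x, 0 ≤ g x) (hg : IntegrableOn g (Ioi 0))
    (hμg : ∫ y in Ioi 0, g y = μ) (hμ : 0 < μ)
    (hnbue : ∀ x ≥ 0, ∫ y in Ioi x, g y ≤ μ * g x) (hs : 0 ≤ s) :
    ∫ x in (0:ℝ)..s, Real.exp (-(μ⁻¹ * x)) ≤ ∫ x in (0:ℝ)..s, g x := by
  have htail := setIntegral_Ioi_le_mul_exp_of_nbue hg0 hg hμ hnbue hs
  rw [intervalIntegral_exp_neg_mul _ _ (inv_ne_zero hμ.ne'),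
    ← intervalIntegral.integral_Ioi_sub_Ioi hg hs, hμg, div_inv_eq_mul]
  rw [hμg] at htail
  linarith

end TailIntegral

section WeightedComparison

lemma lintegral_Ioi_mul_lintegral_Ioi_eq {w h : ℝ → ℝ≥0∞} (hw : Measurable w)
    (hh : Measurable h) :
    ∫⁻ t in Ioi 0, h t * ∫⁻ s in Ioi t, w s = ∫⁻ s in Ioi 0, w s * ∫⁻ t in Ioo 0 s, h t := by
  set F : ℝ → ℝ → ℝ≥0∞ := fun t s =>
    {p : ℝ × ℝ | p.1 < p.2}.indicator (fun p => h p.1 * w p.2) (t, s) with hF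
  have hFm : Measurable (Function.uncurry F) :=
    ((hh.comp measurable_fst).mul (hw.comp measurable_snd)).indicator
      (measurableSet_lt measurable_fst measurable_snd)
  have hinner (s : ℝ) : ∫⁻ t in Ioi 0, F t s = w s * ∫⁻ t in Ioo 0 s, h t := by
    rw [mul_comm, ← lintegral_mul_const _ hh, ← Iio_inter_Ioi,
      ← Measure.restrict_restrict measurableSet_Iio, ← lintegral_indicator measurableSet_Iio]
    congr with t
  calc ∫⁻ t in Ioi 0, h t * ∫⁻ s in Ioi t, w s = ∫⁻ t in Ioi 0, ∫⁻ s, F t s := by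
        refine lintegral_congr fun t => ?_
        rw [← lintegral_const_mul _ hw, ← lintegral_indicator measurableSet_Ioi]
        congr with s
    _ = ∫⁻ s, ∫⁻ t in Ioi 0, F t s := lintegral_lintegral_swap hFm.aemeasurable
    _ = ∫⁻ s in Ioi 0, w s * ∫⁻ t in Ioo 0 s, h t := by
        simp_rw [hinner]
        refine (setLIntegral_eq_of_support_subset fun s hs => ?_).symm
        rw [mem_Ioi]
        by_contra! hs0
        exact hs (by simp [Ioo_eq_empty hs0.not_gt])

lemma lintegral_Ioi_mul_lintegral_Ioi_mono {w f g : ℝ → ℝ≥0∞} (hw : Measurable w)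
    (hf : Measurable f) (hg : Measurable g)
    (hfg : ∀ s > 0, ∫⁻ t in Ioo 0 s, f t ≤ ∫⁻ t in Ioo 0 s, g t) :
    ∫⁻ t in Ioi 0, f t * ∫⁻ s in Ioi t, w s ≤ ∫⁻ t in Ioi 0, g t * ∫⁻ s in Ioi t, w s := by
  rw [lintegral_Ioi_mul_lintegral_Ioi_eq hw hf, lintegral_Ioi_mul_lintegral_Ioi_eq hw hg]
  exact setLIntegral_mono' measurableSet_Ioi fun s hs => mul_le_mul_right (hfg s hs) _

lemma lintegral_Ioi_one_sub_mul_rpow_sub_two {r t : ℝ} (hr : r < 1) (ht : 0 < t) :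
    ∫⁻ s in Ioi t, ENNReal.ofReal ((1 - r) * s ^ (r - 2)) = ENNReal.ofReal (t ^ (r - 1)) := by
  have hr2 : r - 2 < -1 := by linarith
  rw [← ofReal_integral_eq_lintegral_ofReal
      ((integrableOn_Ioi_rpow_of_lt hr2 ht).const_mul _),
    MeasureTheory.integral_const_mul, integral_Ioi_rpow_of_lt hr2 ht,
    show r - 2 + 1 = r - 1 by ring]
  · congr 1
    field_simp [show r - 1 ≠ 0 by linarith]
    ring
  · filter_upwards [ae_restrict_mem measurableSet_Ioi] with s hs
    have := Real.rpow_nonneg (ht.trans hs).le (r - 2)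
    have : 0 ≤ 1 - r := by linarith
    positivity

lemma lintegral_mul_rpow_le_of_lintegral_Ioo_le {r : ℝ} (hr : r < 1) {f g : ℝ → ℝ≥0∞}
    (hf : Measurable f) (hg : Measurable g)
    (hfg : ∀ s > 0, ∫⁻ t in Ioo 0 s, f t ≤ ∫⁻ t in Ioo 0 s, g t) :
    ∫⁻ t in Ioi 0, f t * ENNReal.ofReal (t ^ (r - 1)) ≤
      ∫⁻ t in Ioi 0, g t * ENNReal.ofReal (t ^ (r - 1)) := by
  -- A decreasing weight is a mixture of indicators of `(0, s)`, which only see cumulatives.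
  have hweight (h : ℝ → ℝ≥0∞) : ∫⁻ t in Ioi 0, h t * ENNReal.ofReal (t ^ (r - 1)) =
      ∫⁻ t in Ioi 0, h t * ∫⁻ s in Ioi t, ENNReal.ofReal ((1 - r) * s ^ (r - 2)) :=
    setLIntegral_congr_fun measurableSet_Ioi fun t ht => by
      rw [lintegral_Ioi_one_sub_mul_rpow_sub_two hr ht]
  rw [hweight, hweight]
  exact lintegral_Ioi_mul_lintegral_Ioi_mono (by fun_prop) hf hg hfg

end WeightedComparison

lemma lintegral_exp_neg_inv_mul_mul_rpow {μ r : ℝ} (hμ : 0 < μ) (hr : 0 < r) :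
    ∫⁻ t in Ioi 0, ENNReal.ofReal (Real.exp (-(μ⁻¹ * t))) * ENNReal.ofReal (t ^ (r - 1)) =
      ENNReal.ofReal (μ ^ r * Real.Gamma r) := by
  have hint : IntegrableOn (fun t : ℝ => t ^ (r - 1) * Real.exp (-(μ⁻¹ * t))) (Ioi 0) := by
    simpa using integrableOn_rpow_mul_exp_neg_mul_rpow (p := 1) (by linarith) one_pos
      (inv_pos.2 hμ)
  have hval : ∫ t in Ioi 0, t ^ (r - 1) * Real.exp (-(μ⁻¹ * t)) = μ ^ r * Real.Gamma r := by
    simpa using Real.integral_rpow_mul_exp_neg_mul_Ioi hr (inv_pos.2 hμ)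
  rw [← hval, ofReal_integral_eq_lintegral_ofReal hint]
  · refine setLIntegral_congr_fun measurableSet_Ioi fun t ht => ?_
    rw [mul_comm, ENNReal.ofReal_mul (Real.rpow_nonneg (le_of_lt ht) _)]
  · filter_upwards [ae_restrict_mem measurableSet_Ioi] with t ht
    have := Real.rpow_nonneg (le_of_lt ht) (r - 1)
    positivity

section Survival

variable {Ω : Type*} [MeasurableSpace Ω] {P : Measure Ω} {X : Ω → ℝ}

lemma measurable_measure_setOf_lt (P : Measure Ω) (X : Ω → ℝ) :
    Measurable fun t => P {ω | t < X ω} :=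
  Antitone.measurable fun _ _ hst => measure_mono fun _ h => hst.trans_lt h

lemma integrableOn_measureReal_lt (hint : Integrable X P) (hX0 : 0 ≤ᵐ[P] X) :
    IntegrableOn (fun t => P.real {ω | t < X ω}) (Ioi 0) := by
  refine ⟨(measurable_measure_setOf_lt P X).ennreal_toReal.aestronglyMeasurable, ?_⟩
  rw [hasFiniteIntegral_iff_ofReal (.of_forall fun _ => measureReal_nonneg),
    setLIntegral_congr_fun measurableSet_Ioi fun t ht =>
      ofReal_measureReal (hint.measure_gt_lt_top ht).ne,
    ← lintegral_eq_lintegral_meas_lt P hX0 hint.aemeasurable]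
  exact hint.lintegral_lt_top

lemma lintegral_Ioo_exp_le_lintegral_Ioo_meas_lt (hint : Integrable X P) (hX0 : 0 ≤ᵐ[P] X)
    {μ : ℝ} (hμdef : μ = ∫ ω, X ω ∂P) (hμ : 0 < μ)
    (hNBUE : ∀ t ≥ (0:ℝ), ∫ x in Ioi t, P.real {ω | x < X ω} ≤ μ * P.real {ω | t < X ω})
    {s : ℝ} (hs : 0 < s) :
    ∫⁻ t in Ioo 0 s, ENNReal.ofReal (Real.exp (-(μ⁻¹ * t))) ≤ ∫⁻ t in Ioo 0 s, P {ω | t < X ω} := by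
  have hg := integrableOn_measureReal_lt hint hX0
  have hcum := intervalIntegral_exp_le_of_nbue (fun _ => measureReal_nonneg) hg
    (by rw [hμdef, hint.integral_eq_integral_meas_lt hX0]) hμ hNBUE hs.le
  simp only [intervalIntegral.integral_of_le hs.le, integral_Ioc_eq_integral_Ioo] at hcum
  calc ∫⁻ t in Ioo 0 s, ENNReal.ofReal (Real.exp (-(μ⁻¹ * t)))
      = ENNReal.ofReal (∫ t in Ioo 0 s, Real.exp (-(μ⁻¹ * t))) :=
        (ofReal_integral_eq_lintegral_ofReal
          ((by fun_prop : Continuous _).integrableOn_Icc.mono_set Ioo_subset_Icc_self)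
          (.of_forall fun _ => (Real.exp_pos _).le)).symm
    _ ≤ ENNReal.ofReal (∫ t in Ioo 0 s, P.real {ω | t < X ω}) := ENNReal.ofReal_le_ofReal hcum
    _ = ∫⁻ t in Ioo 0 s, P {ω | t < X ω} := by
        rw [ofReal_integral_eq_lintegral_ofReal (hg.mono_set Ioo_subset_Ioi_self)
          (.of_forall fun _ => measureReal_nonneg)]
        exact setLIntegral_congr_fun measurableSet_Ioo fun t ht =>
          ofReal_measureReal (hint.measure_gt_lt_top ht.1).ne

end Survival

theorem nbue_moment_lower_bound_general
    {Ω : Type*} [MeasurableSpace Ω] (P : Measure Ω) [IsProbabilityMeasure P]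
    (X : Ω → ℝ) (hX0 : ∀ ω, 0 ≤ X ω)
    (hint : Integrable X P) (μ : ℝ) (hμdef : μ = ∫ ω, X ω ∂P) (hμ : 0 < μ)
    (hNBUE : ∀ t ≥ (0:ℝ),
      ∫ x in Ioi t, (P {ω | x < X ω}).toReal ≤ μ * (P {ω | t < X ω}).toReal) :
    ∀ r : ℝ, 0 < r → r < 1 → Real.Gamma (r + 1) * μ ^ r ≤ ∫ ω, X ω ^ r ∂P := by
  intro r hr hr1
  have hX0' : 0 ≤ᵐ[P] X := .of_forall hX0
  have hcomp : ENNReal.ofReal (μ ^ r * Real.Gamma r) ≤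
      ∫⁻ t in Ioi 0, P {ω | t < X ω} * ENNReal.ofReal (t ^ (r - 1)) := by
    rw [← lintegral_exp_neg_inv_mul_mul_rpow hμ hr]
    exact lintegral_mul_rpow_le_of_lintegral_Ioo_le hr1 (by fun_prop)
      (measurable_measure_setOf_lt P X) fun s hs => lintegral_Ioo_exp_le_lintegral_Ioo_meas_lt hint hX0' hμdef hμ hNBUE hs
  have hint_r : Integrable (fun ω => X ω ^ r) P := by
    simpa [Real.norm_of_nonneg (hX0 _)] using integrable_norm_rpow_of_le
      hint.aestronglyMeasurable hr.le zero_le_one hr1.le (by simpa using hint.norm)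
  rw [integral_eq_lintegral_of_nonneg_ae (.of_forall fun ω => Real.rpow_nonneg (hX0 ω) r)
      hint_r.aestronglyMeasurable,
    ← ENNReal.ofReal_le_iff_le_toReal hint_r.lintegral_lt_top.ne,
    lintegral_rpow_eq_lintegral_meas_lt_mul P hX0' hint.aemeasurable hr,
    Real.Gamma_add_one hr.ne', mul_assoc, ENNReal.ofReal_mul hr.le, mul_comm (Real.Gamma r)]
  gcongr

/-- If `X` is a nonnegative random variable with NBUE distribution and mean `μ > 0`,
then for every `0 < r < 1`, `E[X^r] ≥ Γ(r+1) μ^r`. -/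
theorem nbue_moment_lower_bound
    {Ω : Type*} [MeasurableSpace Ω] (P : Measure Ω) [IsProbabilityMeasure P]
    (X : Ω → ℝ) (hXm : Measurable X) (hX0 : ∀ ω, 0 ≤ X ω)
    (hint : Integrable X P) (μ : ℝ) (hμdef : μ = ∫ ω, X ω ∂P) (hμ : 0 < μ)
    (hNBUE : ∀ t ≥ (0:ℝ),
      ∫ x in Ioi t, (P {ω | x < X ω}).toReal ≤ μ * (P {ω | t < X ω}).toReal) :
    ∀ r : ℝ, 0 < r → r < 1 → Real.Gamma (r + 1) * μ ^ r ≤ ∫ ω, X ω ^ r ∂P :=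
  nbue_moment_lower_bound_general P X hX0 hint μ hμdef hμ hNBUE
end

section
/- An NBUE life distribution has finite moments of all orders. -/
open MeasureTheory Set Real

/-! Since `F̄` is antitone, `2μ F̄(t + 2μ) ≤ ∫_t^∞ F̄ ≤ μ F̄(t)`: the survival function at least
halves over every interval of length `2μ`. Hence `F̄(t) ≤ 2 exp(-t log 2 / (2μ))`, and an
exponential tail makes every moment `E[X^r] = r ∫_0^∞ t^(r-1) F̄(t) dt` finite. -/

section SurvivalFunction

variable {F : ℝ → ℝ}

lemma Antitone.mul_le_setIntegral_Ioi (hF : Antitone F) (hF0 : 0 ≤ F) {t a : ℝ} (ha : 0 ≤ a)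
    (hint : IntegrableOn F (Ioi t)) : a * F (t + a) ≤ ∫ x in Ioi t, F x :=
  calc a * F (t + a) = ∫ _ in Ioc t (t + a), F (t + a) := by
        simp [volume_real_Ioc_of_le (le_add_of_nonneg_right ha)]
    _ ≤ ∫ x in Ioc t (t + a), F x :=
        setIntegral_mono_on (by simp) (hint.mono_set Ioc_subset_Ioi_self) measurableSet_Ioc
          fun _ hx => hF hx.2
    _ ≤ ∫ x in Ioi t, F x :=
        setIntegral_mono_set hint (ae_of_all _ hF0) Ioc_subset_Ioi_self.eventuallyLE

lemma Antitone.le_half_of_setIntegral_Ioi_le (hF : Antitone F) (hF0 : 0 ≤ F) {t c : ℝ} (hc : 0 < c)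
    (hint : IntegrableOn F (Ioi t)) (h : ∫ x in Ioi t, F x ≤ c * F t) :
    F (t + 2 * c) ≤ F t / 2 := by
  have := (hF.mul_le_setIntegral_Ioi hF0 (a := 2 * c) (by positivity) hint).trans h
  rw [le_div_iff₀ two_pos]
  nlinarith

lemma le_div_two_pow_of_le_half {a : ℝ} (ha : 0 ≤ a) (hhalf : ∀ t ≥ 0, F (t + a) ≤ F t / 2)
    (n : ℕ) : F (a * n) ≤ F 0 / 2 ^ n := by
  induction n with
  | zero => simp
  | succ n ih =>
    calc F (a * ↑(n + 1)) = F (a * n + a) := by push_cast; ring_nf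
      _ ≤ F (a * n) / 2 := hhalf _ (by positivity)
      _ ≤ F 0 / 2 ^ n / 2 := by gcongr
      _ = F 0 / 2 ^ (n + 1) := by ring

lemma Antitone.le_mul_exp_of_le_half (hF : Antitone F) (hF0 : 0 ≤ F) {a : ℝ} (ha : 0 < a)
    (hhalf : ∀ t ≥ 0, F (t + a) ≤ F t / 2) {t : ℝ} (ht : 0 ≤ t) :
    F t ≤ 2 * F 0 * exp (-(log 2 / a) * t) := by
  set n := ⌊t / a⌋₊
  have hn : a * n ≤ t := by
    rw [mul_comm, ← le_div_iff₀ ha]; exact Nat.floor_le (by positivity)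
  have hn' : (log 2 / a) * t ≤ log 2 * (n + 1) := by
    rw [div_mul_eq_mul_div, div_le_iff₀ ha, mul_assoc]
    gcongr
    exact (div_le_iff₀ ha).1 (Nat.lt_floor_add_one _).le
  have hexp : 1 / 2 ^ (n + 1) ≤ exp (-(log 2 / a) * t) :=
    calc 1 / 2 ^ (n + 1) = exp (-(log 2 * (n + 1))) := by
          rw [exp_neg, ← rpow_def_of_pos two_pos, ← Nat.cast_succ, rpow_natCast, one_div]
      _ ≤ exp (-(log 2 / a) * t) := by gcongr; linarith
  calc F t ≤ F 0 / 2 ^ n := (hF hn).trans (le_div_two_pow_of_le_half ha.le hhalf n)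
    _ = 2 * F 0 * (1 / 2 ^ (n + 1)) := by ring
    _ ≤ 2 * F 0 * exp (-(log 2 / a) * t) := by gcongr; exact mul_nonneg zero_le_two (hF0 0)

end SurvivalFunction

section Tail

variable {α : Type*} [MeasurableSpace α] {μ : Measure α} {f : α → ℝ}

lemma antitone_measure_lt : Antitone fun t => μ {a | t < f a} :=
  fun _ _ hst => measure_mono fun _ h => lt_of_le_of_lt hst h

lemma MeasureTheory.Integrable.integrableOn_measureReal_lt (hf : Integrable f μ)
    (hf0 : 0 ≤ᵐ[μ] f) : IntegrableOn (fun t => μ.real {a | t < f a}) (Ioi 0) := by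
  refine integrable_toReal_of_lintegral_ne_top antitone_measure_lt.measurable.aemeasurable ?_
  rw [← lintegral_eq_lintegral_meas_lt μ hf0 hf.aemeasurable]
  exact hf.lintegral_lt_top.ne

lemma integrable_rpow_of_measure_lt_le_exp (hf0 : 0 ≤ᵐ[μ] f) (hf : AEMeasurable f μ)
    {C b : ℝ} (hb : 0 < b)
    (htail : ∀ t > 0, μ {a | t < f a} ≤ ENNReal.ofReal (C * exp (-b * t))) {r : ℝ} (hr : 0 < r) :
    Integrable (fun a => f a ^ r) μ := by
  have hg : IntegrableOn (fun t : ℝ => C * exp (-b * t) * t ^ (r - 1)) (Ioi 0) := by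
    have : IntegrableOn (fun t : ℝ => C * (t ^ (r - 1) * exp (-b * t ^ (1 : ℝ)))) (Ioi 0) :=
      (integrableOn_rpow_mul_exp_neg_mul_rpow (by linarith) one_pos hb).const_mul C
    refine this.congr_fun (fun t _ => ?_) measurableSet_Ioi
    simp only [rpow_one]; ring
  refine ⟨(hf.pow_const r).aestronglyMeasurable, ?_⟩
  rw [hasFiniteIntegral_iff_ofReal (hf0.mono fun a ha => rpow_nonneg ha r),
    lintegral_rpow_eq_lintegral_meas_lt_mul μ hf0 hf hr]
  refine ENNReal.mul_lt_top ENNReal.ofReal_lt_top (lt_of_le_of_lt ?_ hg.lintegral_lt_top)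
  refine setLIntegral_mono' measurableSet_Ioi fun t ht => ?_
  rw [ENNReal.ofReal_mul' (rpow_nonneg (le_of_lt ht) _)]
  gcongr
  exact htail t ht

end Tail

theorem nbue_finite_moments_general
    {Ω : Type*} [MeasurableSpace Ω] (P : Measure Ω) [IsProbabilityMeasure P]
    (X : Ω → ℝ) (hXm : Measurable X) (hX0 : ∀ ω, 0 ≤ X ω)
    (hint : Integrable X P) (μ : ℝ) (hμ : 0 < μ)
    (hNBUE : ∀ t ≥ (0:ℝ),
      ∫ x in Ioi t, (P {ω | x < X ω}).toReal ≤ μ * (P {ω | t < X ω}).toReal) :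
    ∀ r : ℝ, 0 < r → Integrable (fun ω => X ω ^ r) P := by
  intro r hr
  set F : ℝ → ℝ := fun t => (P {ω | t < X ω}).toReal
  have hF : Antitone F := fun _ _ hst =>
    ENNReal.toReal_mono (measure_ne_top _ _) (antitone_measure_lt hst)
  have hF0 : 0 ≤ F := fun _ => ENNReal.toReal_nonneg
  have hF1 : F 0 ≤ 1 := measureReal_le_one
  have hhalf : ∀ t ≥ 0, F (t + 2 * μ) ≤ F t / 2 := fun t ht =>
    hF.le_half_of_setIntegral_Ioi_le hF0 hμ
      ((hint.integrableOn_measureReal_lt (ae_of_all _ hX0)).mono_set (Ioi_subset_Ioi ht))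
      (hNBUE t ht)
  refine integrable_rpow_of_measure_lt_le_exp (C := 2) (b := log 2 / (2 * μ))
    (ae_of_all _ hX0) hXm.aemeasurable (div_pos (log_pos one_lt_two) (by positivity))
    (fun t ht => ?_) hr
  rw [← ENNReal.ofReal_toReal (measure_ne_top P _)]
  gcongr
  calc F t ≤ 2 * F 0 * exp (-(log 2 / (2 * μ)) * t) :=
        hF.le_mul_exp_of_le_half hF0 (by positivity) hhalf ht.le
    _ ≤ 2 * exp (-(log 2 / (2 * μ)) * t) := by gcongr; linarith

/-- If `X` is a nonnegative random variable with NBUE distribution and mean `μ > 0`,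
then `X` has finite moments of all orders `r > 0`. -/
theorem nbue_finite_moments
    {Ω : Type*} [MeasurableSpace Ω] (P : Measure Ω) [IsProbabilityMeasure P]
    (X : Ω → ℝ) (hXm : Measurable X) (hX0 : ∀ ω, 0 ≤ X ω)
    (hint : Integrable X P) (μ : ℝ) (hμdef : μ = ∫ ω, X ω ∂P) (hμ : 0 < μ)
    (hNBUE : ∀ t ≥ (0:ℝ),
      ∫ x in Ioi t, (P {ω | x < X ω}).toReal ≤ μ * (P {ω | t < X ω}).toReal) :
    ∀ r : ℝ, 0 < r → Integrable (fun ω => X ω ^ r) P :=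
  nbue_finite_moments_general P X hXm hX0 hint μ hμ hNBUE
end

section
/- If F_n is a sequence of NBUE life distributions with means μ_n ≤ M for all n, and F_n converges in distribution to a continuous life distribution F with finite mean μ, then F is NBUE. -/
/-!
For fixed `b`, bounded convergence gives `∫₀ᵇ (1 - Fₙ) → ∫₀ᵇ (1 - G)`. The NBUE inequality at `b`
bounds the tail `∫_b^∞ (1 - Fₙ)` by `M (1 - Fₙ b) → M (1 - G b)`, which is small for large `b`
uniformly in `n`; hence `μₙ → μ`. Passing to the limit in `∫ₜᵇ (1 - Fₙ) ≤ μₙ (1 - Fₙ t)` and then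
letting `b → ∞` gives the NBUE inequality for `G`.
-/

open MeasureTheory Set Filter Topology

lemma tendsto_of_abs_sub_le_of_tendsto {ι β : Type*} {l : Filter ι} {L : Filter β} [L.NeBot]
    {u : ι → ℝ} {c : ℝ} {A e : β → ι → ℝ} {I e' : β → ℝ}
    (hA : ∀ b, Tendsto (A b) l (𝓝 (I b))) (hI : Tendsto I L (𝓝 c))
    (he : ∀ b, Tendsto (e b) l (𝓝 (e' b))) (he' : Tendsto e' L (𝓝 0))
    (hu : ∀ᶠ b in L, ∀ n, |u n - A b n| ≤ e b n) :
    Tendsto u l (𝓝 c) := by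
  rw [Metric.tendsto_nhds]
  intro ε hε
  obtain ⟨b, hIb, heb, hub⟩ := ((Metric.tendsto_nhds.mp hI (ε / 3) (by positivity)).and
    ((he'.eventually (gt_mem_nhds (by positivity : (0 : ℝ) < ε / 3))).and hu)).exists
  filter_upwards [Metric.tendsto_nhds.mp (hA b) (ε / 3) (by positivity),
    (he b).eventually (gt_mem_nhds heb)] with n hAn hen
  rw [Real.dist_eq] at *
  linarith [abs_sub_le (u n) (A b n) c, abs_sub_le (A b n) (I b) c, hub n]

lemma mem_Icc_of_monotone_of_tendsto {f : ℝ → ℝ} (hmono : Monotone f) (hneg : ∀ t < 0, f t = 0)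
    (hlim : Tendsto f atTop (𝓝 1)) (x : ℝ) : f x ∈ Icc 0 1 :=
  ⟨hneg (min x (-1)) (by simp) ▸ hmono (min_le_left x (-1)), hmono.ge_of_tendsto hlim x⟩

lemma intervalIntegral_le_setIntegral_Ioi {f : ℝ → ℝ} {a b : ℝ} (hf : IntegrableOn f (Ioi a))
    (hf0 : ∀ x, 0 ≤ f x) (hab : a ≤ b) : ∫ x in a..b, f x ≤ ∫ x in Ioi a, f x := by
  rw [← intervalIntegral.integral_Ioi_sub_Ioi hf hab]
  exact sub_le_self _ (setIntegral_nonneg measurableSet_Ioi fun x _ => hf0 x)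

lemma tendsto_intervalIntegral_one_sub {F : ℕ → ℝ → ℝ} {G : ℝ → ℝ}
    (hmeas : ∀ n, Measurable (F n)) (hF : ∀ n x, F n x ∈ Icc 0 1)
    (hconv : ∀ x, Tendsto (fun n => F n x) atTop (𝓝 (G x))) (a b : ℝ) :
    Tendsto (fun n => ∫ x in a..b, (1 - F n x)) atTop (𝓝 (∫ x in a..b, (1 - G x))) := by
  refine intervalIntegral.tendsto_integral_filter_of_dominated_convergence (fun _ => 1)
    (.of_forall fun n => (measurable_const.sub (hmeas n)).aestronglyMeasurable)
    (.of_forall fun n => .of_forall fun x _ => ?_) intervalIntegrable_const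
    (.of_forall fun x _ => tendsto_const_nhds.sub (hconv x))
  rw [Real.norm_eq_abs, abs_le]
  constructor <;> linarith [(hF n x).1, (hF n x).2]

lemma abs_mean_sub_intervalIntegral_le {f : ℝ → ℝ} {m M b : ℝ} (hf1 : ∀ x, f x ≤ 1)
    (hint : IntegrableOn (fun t => 1 - f t) (Ioi 0)) (hmean : ∫ t in Ioi 0, (1 - f t) = m)
    (hnbue : ∫ x in Ioi b, (1 - f x) ≤ m * (1 - f b)) (hm : m ≤ M) (hb : 0 ≤ b) :
    |m - ∫ x in 0..b, (1 - f x)| ≤ M * (1 - f b) := by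
  have htail : m - ∫ x in 0..b, (1 - f x) = ∫ x in Ioi b, (1 - f x) := by
    rw [← hmean, ← intervalIntegral.integral_interval_add_Ioi hint
      (hint.mono_set (Ioi_subset_Ioi hb)), add_sub_cancel_left]
  have htail0 : 0 ≤ ∫ x in Ioi b, (1 - f x) :=
    setIntegral_nonneg measurableSet_Ioi fun x _ => sub_nonneg.2 (hf1 x)
  rw [htail, abs_of_nonneg htail0]
  exact hnbue.trans (mul_le_mul_of_nonneg_right hm (sub_nonneg.2 (hf1 b)))

lemma tendsto_mean_of_nbue {F : ℕ → ℝ → ℝ} {μn : ℕ → ℝ} {M : ℝ} {G : ℝ → ℝ} {μ : ℝ}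
    (hmeas : ∀ n, Measurable (F n)) (hF : ∀ n x, F n x ∈ Icc 0 1)
    (hintn : ∀ n, IntegrableOn (fun t => 1 - F n t) (Ioi 0))
    (hmean : ∀ n, ∫ t in Ioi (0:ℝ), (1 - F n t) = μn n)
    (hNBUE : ∀ n, ∀ t ≥ (0:ℝ), ∫ x in Ioi t, (1 - F n x) ≤ μn n * (1 - F n t))
    (hM : ∀ n, μn n ≤ M) (hGlim : Tendsto G atTop (𝓝 1))
    (hGint : IntegrableOn (fun t => 1 - G t) (Ioi 0)) (hGmean : ∫ t in Ioi (0:ℝ), (1 - G t) = μ)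
    (hconv : ∀ x, Tendsto (fun n => F n x) atTop (𝓝 (G x))) :
    Tendsto μn atTop (𝓝 μ) := by
  refine tendsto_of_abs_sub_le_of_tendsto (A := fun b n => ∫ x in 0..b, (1 - F n x))
    (e := fun b n => M * (1 - F n b)) (e' := fun b => M * (1 - G b))
    (tendsto_intervalIntegral_one_sub hmeas hF hconv 0)
    (hGmean ▸ intervalIntegral_tendsto_integral_Ioi 0 hGint tendsto_id)
    (fun b => tendsto_const_nhds.mul (tendsto_const_nhds.sub (hconv b)))
    (by simpa using (tendsto_const_nhds (x := M)).mul ((tendsto_const_nhds (x := 1)).sub hGlim))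
    ?_
  filter_upwards [eventually_ge_atTop 0] with b hb n
  exact abs_mean_sub_intervalIntegral_le (fun x => (hF n x).2) (hintn n) (hmean n)
    (hNBUE n b hb) (hM n) hb

theorem nbue_closed_under_weak_convergence_general
    (F : ℕ → ℝ → ℝ) (μn : ℕ → ℝ) (M : ℝ)
    (hmono : ∀ n, Monotone (F n)) (hneg : ∀ n, ∀ t < (0:ℝ), F n t = 0)
    (hlim : ∀ n, Tendsto (F n) atTop (nhds 1))
    (hintn : ∀ n, IntegrableOn (fun t => 1 - F n t) (Ioi 0))
    (hmean : ∀ n, ∫ t in Ioi (0:ℝ), (1 - F n t) = μn n)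
    (hNBUE : ∀ n, ∀ t ≥ (0:ℝ), ∫ x in Ioi t, (1 - F n x) ≤ μn n * (1 - F n t))
    (hM : ∀ n, μn n ≤ M)
    (G : ℝ → ℝ) (μ : ℝ)
    (hGlim : Tendsto G atTop (nhds 1))
    (hGint : IntegrableOn (fun t => 1 - G t) (Ioi 0))
    (hGmean : ∫ t in Ioi (0:ℝ), (1 - G t) = μ)
    (hconv : ∀ x, Tendsto (fun n => F n x) atTop (nhds (G x))) :
    ∀ t ≥ (0:ℝ), ∫ x in Ioi t, (1 - G x) ≤ μ * (1 - G t) := by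
  intro t ht
  have hF : ∀ n x, F n x ∈ Icc 0 1 := fun n =>
    mem_Icc_of_monotone_of_tendsto (hmono n) (hneg n) (hlim n)
  have hmeas : ∀ n, Measurable (F n) := fun n => (hmono n).measurable
  have hμ : Tendsto μn atTop (𝓝 μ) :=
    tendsto_mean_of_nbue hmeas hF hintn hmean hNBUE hM hGlim hGint hGmean hconv
  have htrunc : ∀ b ≥ t, ∫ x in t..b, (1 - G x) ≤ μ * (1 - G t) := fun b hb =>
    le_of_tendsto_of_tendsto' (tendsto_intervalIntegral_one_sub hmeas hF hconv t b)
      (hμ.mul (tendsto_const_nhds.sub (hconv t))) fun n =>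
      (intervalIntegral_le_setIntegral_Ioi ((hintn n).mono_set (Ioi_subset_Ioi ht))
        (fun x => sub_nonneg.2 (hF n x).2) hb).trans (hNBUE n t ht)
  exact le_of_tendsto
    (intervalIntegral_tendsto_integral_Ioi t (hGint.mono_set (Ioi_subset_Ioi ht)) tendsto_id)
    ((eventually_ge_atTop t).mono htrunc)

/-- If `Fₙ` are NBUE life distributions with bounded means converging in distribution
to a continuous life distribution `G` with finite mean `μ`, then `G` is NBUE. -/
theorem nbue_closed_under_weak_convergence
    (F : ℕ → ℝ → ℝ) (μn : ℕ → ℝ) (M : ℝ)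
    (hmono : ∀ n, Monotone (F n)) (hneg : ∀ n, ∀ t < (0:ℝ), F n t = 0)
    (hlim : ∀ n, Tendsto (F n) atTop (nhds 1))
    (hintn : ∀ n, IntegrableOn (fun t => 1 - F n t) (Ioi 0))
    (hmean : ∀ n, ∫ t in Ioi (0:ℝ), (1 - F n t) = μn n)
    (hNBUE : ∀ n, ∀ t ≥ (0:ℝ), ∫ x in Ioi t, (1 - F n x) ≤ μn n * (1 - F n t))
    (hM : ∀ n, μn n ≤ M)
    (G : ℝ → ℝ) (μ : ℝ)
    (hGmono : Monotone G) (hGneg : ∀ t < (0:ℝ), G t = 0)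
    (hGlim : Tendsto G atTop (nhds 1)) (hGcont : Continuous G)
    (hGint : IntegrableOn (fun t => 1 - G t) (Ioi 0))
    (hGmean : ∫ t in Ioi (0:ℝ), (1 - G t) = μ)
    (hconv : ∀ x, Tendsto (fun n => F n x) atTop (nhds (G x))) :
    ∀ t ≥ (0:ℝ), ∫ x in Ioi t, (1 - G x) ≤ μ * (1 - G t) :=
  nbue_closed_under_weak_convergence_general F μn M hmono hneg hlim hintn hmean hNBUE hM G μ hGlim
    hGint hGmean hconv
end

section
/- If F_n is a sequence of NBUE life distributions with means μ_n bounded by M, and F_n converges in distribution to a continuous life distribution F with finite mean μ, then μ_n → μ. -/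
/-!
By Markov's inequality `C · F̄ₙ(C) ≤ μₙ`, so the NBUE inequality bounds the tail
`∫_C^∞ F̄ₙ ≤ μₙ F̄ₙ(C) ≤ M² / C` uniformly in `n`. Hence the truncated means `∫_0^C F̄ₙ` converge
to `μₙ` uniformly in `n` as `C → ∞`, while for fixed `C` they converge to `∫_0^C Ḡ` by bounded
convergence. Exchanging the two limits (Moore–Osgood) gives `μₙ → ∫_0^∞ Ḡ = μ`.
-/

open MeasureTheory Set Filter Topology

theorem tendstoUniformly_of_dist_le {ι β α : Type*} [PseudoMetricSpace α] {F : ι → β → α}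
    {f : β → α} {p : Filter ι} {b : ι → ℝ} (hb : Tendsto b p (𝓝 0))
    (hdist : ∀ᶠ i in p, ∀ x, dist (f x) (F i x) ≤ b i) : TendstoUniformly F f p :=
  Metric.tendstoUniformly_iff.2 fun ε hε => by
    filter_upwards [hdist, hb.eventually (gt_mem_nhds hε)] with i hi hbi x
    exact (hi x).trans_lt hbi

theorem dist_integral_Ioi_intervalIntegral {E : Type*} [NormedAddCommGroup E] [NormedSpace ℝ E]
    {f : ℝ → E} {a b : ℝ} (hf : IntegrableOn f (Ioi a)) (hab : a ≤ b) :
    dist (∫ t in Ioi a, f t) (∫ t in a..b, f t) = ‖∫ t in Ioi b, f t‖ := by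
  rw [← intervalIntegral.integral_interval_add_Ioi hf (hf.mono_set (Ioi_subset_Ioi hab)), add_comm,
    dist_add_self_left]

section Survival

variable {S : ℝ → ℝ}

theorem mul_le_integral_Ioi_of_antitone (hS : Antitone S) (hS0 : ∀ t, 0 ≤ S t)
    (hint : IntegrableOn S (Ioi 0)) {C : ℝ} (hC : 0 ≤ C) :
    C * S C ≤ ∫ t in Ioi 0, S t := by
  have hhead : ∫ _ in (0)..C, S C ≤ ∫ t in (0)..C, S t :=
    intervalIntegral.integral_mono_on hC intervalIntegrable_const
      ((intervalIntegrable_iff_integrableOn_Ioc_of_le hC).2 (hint.mono_set Ioc_subset_Ioi_self))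
      fun t ht => hS ht.2
  have htail : 0 ≤ ∫ t in Ioi C, S t := setIntegral_nonneg measurableSet_Ioi fun t _ => hS0 t
  rw [← intervalIntegral.integral_interval_add_Ioi hint (hint.mono_set (Ioi_subset_Ioi hC))]
  simp only [intervalIntegral.integral_const, sub_zero, smul_eq_mul] at hhead
  linarith

theorem integral_Ioi_le_sq_div_of_nbue (hS : Antitone S) (hS0 : ∀ t, 0 ≤ S t)
    (hint : IntegrableOn S (Ioi 0)) {C : ℝ} (hC : 0 < C)
    (hnbue : ∫ t in Ioi C, S t ≤ (∫ t in Ioi 0, S t) * S C) :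
    ∫ t in Ioi C, S t ≤ (∫ t in Ioi 0, S t) ^ 2 / C := by
  set m := ∫ t in Ioi 0, S t
  have hm : 0 ≤ m := setIntegral_nonneg measurableSet_Ioi fun t _ => hS0 t
  have hmarkov : S C ≤ m / C := by
    rw [le_div_iff₀ hC, mul_comm]
    exact mul_le_integral_Ioi_of_antitone hS hS0 hint hC.le
  calc ∫ t in Ioi C, S t ≤ m * S C := hnbue
    _ ≤ m * (m / C) := mul_le_mul_of_nonneg_left hmarkov hm
    _ = m ^ 2 / C := by ring

end Survival

theorem nbue_means_converge_general
    (F : ℕ → ℝ → ℝ) (μn : ℕ → ℝ) (M : ℝ)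
    (hmono : ∀ n, Monotone (F n)) (hneg : ∀ n, ∀ t < (0:ℝ), F n t = 0)
    (hlim : ∀ n, Tendsto (F n) atTop (nhds 1))
    (hintn : ∀ n, IntegrableOn (fun t => 1 - F n t) (Ioi 0))
    (hmean : ∀ n, ∫ t in Ioi (0:ℝ), (1 - F n t) = μn n)
    (hNBUE : ∀ n, ∀ t ≥ (0:ℝ), ∫ x in Ioi t, (1 - F n x) ≤ μn n * (1 - F n t))
    (hM : ∀ n, μn n ≤ M)
    (G : ℝ → ℝ) (μ : ℝ)
    (hGint : IntegrableOn (fun t => 1 - G t) (Ioi 0))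
    (hGmean : ∫ t in Ioi (0:ℝ), (1 - G t) = μ)
    (hconv : ∀ x, Tendsto (fun n => F n x) atTop (nhds (G x))) :
    Tendsto μn atTop (nhds μ) := by
  have hS : ∀ n, Antitone fun t => 1 - F n t := fun n _ _ h => sub_le_sub_left (hmono n h) 1
  have hS0 : ∀ n t, 0 ≤ 1 - F n t := fun n t => sub_nonneg.2 ((hmono n).ge_of_tendsto (hlim n) t)
  have hF0 : ∀ n t, 0 ≤ F n t := fun n t =>
    (hneg n (min t (-1)) (by simp)).symm.le.trans (hmono n (min_le_left t (-1)))
  have hμ0 : ∀ n, 0 ≤ μn n := fun n =>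
    hmean n ▸ setIntegral_nonneg measurableSet_Ioi fun t _ => hS0 n t
  have htail : ∀ n, ∀ C > 0, ∫ t in Ioi C, (1 - F n t) ≤ M ^ 2 / C := fun n C hC => by
    have h := integral_Ioi_le_sq_div_of_nbue (hS n) (hS0 n) (hintn n) hC
      (by rw [hmean n]; exact hNBUE n C hC.le)
    rw [hmean n] at h
    exact h.trans (div_le_div_of_nonneg_right (pow_le_pow_left₀ (hμ0 n) (hM n) 2) hC.le)
  have hunif : TendstoUniformly (fun C n => ∫ t in (0)..C, (1 - F n t)) μn atTop := by
    refine tendstoUniformly_of_dist_le (tendsto_const_nhds (x := M ^ 2).div_atTop tendsto_id) ?_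
    filter_upwards [eventually_gt_atTop 0] with C hC n
    rw [← hmean n, dist_integral_Ioi_intervalIntegral (hintn n) hC.le,
      Real.norm_of_nonneg (setIntegral_nonneg measurableSet_Ioi fun t _ => hS0 n t)]
    exact htail n C hC
  have htrunc : ∀ C, Tendsto (fun n => ∫ t in (0)..C, (1 - F n t)) atTop
      (𝓝 (∫ t in (0)..C, (1 - G t))) := fun C =>
    intervalIntegral.tendsto_integral_filter_of_dominated_convergence (fun _ => 1)
      (Eventually.of_forall fun n =>
        (measurable_const.sub (hmono n).measurable).aestronglyMeasurable)
      (Eventually.of_forall fun n => Eventually.of_forall fun t _ => by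
        rw [Real.norm_of_nonneg (hS0 n t)]; linarith [hF0 n t])
      intervalIntegrable_const
      (Eventually.of_forall fun t _ => tendsto_const_nhds.sub (hconv t))
  exact hunif.tendsto_of_eventually_tendsto (Eventually.of_forall htrunc)
    (hGmean ▸ intervalIntegral_tendsto_integral_Ioi 0 hGint tendsto_id)

/-- If `Fₙ` are NBUE life distributions with bounded means converging in distribution
to a continuous life distribution `G` with finite mean `μ`, then the means converge: `μₙ → μ`. -/
theorem nbue_means_converge
    (F : ℕ → ℝ → ℝ) (μn : ℕ → ℝ) (M : ℝ)
    (hmono : ∀ n, Monotone (F n)) (hneg : ∀ n, ∀ t < (0:ℝ), F n t = 0)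
    (hlim : ∀ n, Tendsto (F n) atTop (nhds 1))
    (hintn : ∀ n, IntegrableOn (fun t => 1 - F n t) (Ioi 0))
    (hmean : ∀ n, ∫ t in Ioi (0:ℝ), (1 - F n t) = μn n)
    (hNBUE : ∀ n, ∀ t ≥ (0:ℝ), ∫ x in Ioi t, (1 - F n x) ≤ μn n * (1 - F n t))
    (hM : ∀ n, μn n ≤ M)
    (G : ℝ → ℝ) (μ : ℝ)
    (hGmono : Monotone G) (hGneg : ∀ t < (0:ℝ), G t = 0)
    (hGlim : Tendsto G atTop (nhds 1)) (hGcont : Continuous G)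
    (hGint : IntegrableOn (fun t => 1 - G t) (Ioi 0))
    (hGmean : ∫ t in Ioi (0:ℝ), (1 - G t) = μ)
    (hconv : ∀ x, Tendsto (fun n => F n x) atTop (nhds (G x))) :
    Tendsto μn atTop (nhds μ) :=
  nbue_means_converge_general F μn M hmono hneg hlim hintn hmean hNBUE hM G μ hGint hGmean hconv
end

section
/- An NBUE life distribution is uniquely determined by its moment sequence: if F and G are both NBUE with the same moments E[X^k] for all positive integers k, then F = G. -/
/-!
Integrating the NBUE inequality `∫_t^∞ F̄ ≤ μ F̄(t)` against `t ^ k` and applying the layer-cake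
formula on both sides (once for `F`, once for the measure with density `F̄` on `(0, ∞)`) gives
`E[X^(k+2)] ≤ (k+2) μ E[X^(k+1)]`, hence `E[X^k] ≤ k! μ^k`. So `E[exp (t X)]` is finite for
`|t| < 1/μ`, and the complex moment generating function is holomorphic on a vertical strip around
the imaginary axis, with Taylor coefficients at `0` given by the moments. Equal moments thus force
the two complex moment generating functions to agree on the strip, in particular on the
imaginary axis, where they are the characteristic functions.
-/

open MeasureTheory Set Filter ProbabilityTheory Topology
open scoped ENNReal Nat

theorem Complex.eventuallyEq_of_iteratedDeriv_eq {f g : ℂ → ℂ} {c : ℂ} (hf : AnalyticAt ℂ f c)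
    (hg : AnalyticAt ℂ g c) (h : ∀ n, iteratedDeriv n f c = iteratedDeriv n g c) :
    f =ᶠ[𝓝 c] g := by
  obtain ⟨r, hr, hfg⟩ := Metric.eventually_nhds_iff_ball.1
    (hf.eventually_analyticAt.and hg.eventually_analyticAt)
  filter_upwards [Metric.ball_mem_nhds c hr] with z hz
  rw [← taylorSeries_eq_on_ball' hz fun w hw ↦ (hfg w hw).1.differentiableWithinAt,
    ← taylorSeries_eq_on_ball' hz fun w hw ↦ (hfg w hw).2.differentiableWithinAt]
  simp only [h]

theorem MeasureTheory.Measure.ext_of_moment_eq {μ ν : Measure ℝ} [IsFiniteMeasure μ]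
    [IsFiniteMeasure ν] (hμ : 0 ∈ interior (integrableExpSet id μ))
    (hν : 0 ∈ interior (integrableExpSet id ν)) (h : ∀ n : ℕ, ∫ x, x ^ n ∂μ = ∫ x, x ^ n ∂ν) :
    μ = ν := by
  set U : Set ℂ :=
    {z | z.re ∈ interior (integrableExpSet id μ) ∩ interior (integrableExpSet id ν)}
  have hU : IsPreconnected U :=
    ((convex_integrableExpSet.interior.inter convex_integrableExpSet.interior).linear_preimage
      Complex.reLm).isPreconnected
  have hμU : AnalyticOnNhd ℂ (complexMGF id μ) U :=
    analyticOnNhd_complexMGF.mono fun _ hz ↦ hz.1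
  have hνU : AnalyticOnNhd ℂ (complexMGF id ν) U :=
    analyticOnNhd_complexMGF.mono fun _ hz ↦ hz.2
  have h0 : (0 : ℂ) ∈ U := ⟨hμ, hν⟩
  have hderiv (n : ℕ) :
      iteratedDeriv n (complexMGF id μ) 0 = iteratedDeriv n (complexMGF id ν) 0 := by
    rw [iteratedDeriv_complexMGF hμ, iteratedDeriv_complexMGF hν]
    simp only [id, zero_mul, Complex.exp_zero, mul_one, ← Complex.ofReal_pow,
      integral_complex_ofReal, h n]
  have hEqOn : EqOn (complexMGF id μ) (complexMGF id ν) U :=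
    hμU.eqOn_of_preconnected_of_eventuallyEq hνU hU h0
      (Complex.eventuallyEq_of_iteratedDeriv_eq (hμU 0 h0) (hνU 0 h0) hderiv)
  refine Measure.ext_of_charFun (funext fun t ↦ ?_)
  rw [← complexMGF_id_mul_I, ← complexMGF_id_mul_I]
  exact hEqOn (by simpa [U] using h0)

lemma ENNReal.ofReal_exp_eq_tsum {y : ℝ} (hy : 0 ≤ y) :
    ENNReal.ofReal (Real.exp y) = ∑' k : ℕ, ENNReal.ofReal (y ^ k / k !) := by
  rw [Real.exp_eq_exp_ℝ, ← (NormedSpace.expSeries_div_hasSum_exp y).tsum_eq,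
    ENNReal.ofReal_tsum_of_nonneg (fun k ↦ by positivity) (Real.summable_pow_div_factorial y)]

section FactorialMomentBound

variable {μ : Measure ℝ} (h0 : ∀ᵐ x ∂μ, 0 ≤ x) {m : ℝ}
  (hm : ∀ k : ℕ, ∫⁻ x, ENNReal.ofReal (x ^ k) ∂μ ≤ k ! * ENNReal.ofReal m ^ k)
include h0 hm

theorem integrable_exp_mul_of_lintegral_pow_le {t : ℝ} (ht : |t| * m < 1) :
    Integrable (fun x ↦ Real.exp (t * x)) μ := by
  refine ⟨by fun_prop,
    (hasFiniteIntegral_iff_ofReal (ae_of_all _ fun x ↦ (Real.exp_pos _).le)).2 ?_⟩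
  have hcoef (k : ℕ) : ENNReal.ofReal (|t| ^ k / k !) * (k ! * ENNReal.ofReal m ^ k)
      = ENNReal.ofReal (|t| * m) ^ k := by
    rw [ENNReal.ofReal_mul (abs_nonneg t), mul_pow, ← ENNReal.ofReal_pow (abs_nonneg t),
      ← mul_assoc, ENNReal.ofReal_div_of_pos (by positivity), ENNReal.ofReal_natCast,
      ENNReal.div_mul_cancel (by positivity) (ENNReal.natCast_ne_top _)]
  calc ∫⁻ x, ENNReal.ofReal (Real.exp (t * x)) ∂μ
      ≤ ∫⁻ x, ∑' k : ℕ, ENNReal.ofReal (|t| ^ k / k !) * ENNReal.ofReal (x ^ k) ∂μ := by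
        refine lintegral_mono_ae (h0.mono fun x hx ↦ ?_)
        calc ENNReal.ofReal (Real.exp (t * x)) ≤ ENNReal.ofReal (Real.exp (|t| * x)) :=
              ENNReal.ofReal_le_ofReal (Real.exp_le_exp.2 (by gcongr; exact le_abs_self t))
          _ = _ := by
              rw [ENNReal.ofReal_exp_eq_tsum (by positivity)]
              congr! 2 with k
              rw [← ENNReal.ofReal_mul (by positivity)]
              ring_nf
    _ = ∑' k : ℕ, ENNReal.ofReal (|t| ^ k / k !) * ∫⁻ x, ENNReal.ofReal (x ^ k) ∂μ := by
        rw [lintegral_tsum fun k ↦ by fun_prop]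
        simp_rw [lintegral_const_mul' _ _ ENNReal.ofReal_ne_top]
    _ ≤ ∑' k : ℕ, ENNReal.ofReal (|t| * m) ^ k :=
        ENNReal.tsum_le_tsum fun k ↦ (mul_le_mul_right (hm k) _).trans_eq (hcoef k)
    _ = (1 - ENNReal.ofReal (|t| * m))⁻¹ := ENNReal.tsum_geometric _
    _ < ⊤ := ENNReal.inv_lt_top.2 (tsub_pos_of_lt (ENNReal.ofReal_lt_one.2 ht))

theorem zero_mem_interior_integrableExpSet_of_lintegral_pow_le :
    0 ∈ interior (integrableExpSet id μ) :=
  mem_interior.2 ⟨{t | |t| * m < 1}, fun _ ht ↦ integrable_exp_mul_of_lintegral_pow_le h0 hm ht,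
    isOpen_lt (by fun_prop) continuous_const, by simp⟩

end FactorialMomentBound

theorem lintegral_ofReal_pow_succ_eq {μ : Measure ℝ} (h0 : ∀ᵐ x ∂μ, 0 ≤ x) (k : ℕ) :
    ∫⁻ x, ENNReal.ofReal (x ^ (k + 1)) ∂μ
      = (k + 1) * ∫⁻ t in Ioi 0, μ (Ioi t) * ENNReal.ofReal (t ^ k) := by
  have hk : (k : ℝ) + 1 ≠ 0 := by positivity
  have h := lintegral_comp_eq_lintegral_meas_lt_mul μ h0 aemeasurable_id
    (g := fun t ↦ (k + 1) * t ^ k)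
    (fun t _ ↦ (intervalIntegral.intervalIntegrable_pow k).const_mul _)
    (ae_restrict_of_forall_mem measurableSet_Ioi fun t (ht : 0 < t) ↦ by positivity)
  simp only [intervalIntegral.integral_const_mul, integral_pow, ne_eq, add_eq_zero, one_ne_zero,
    and_false, not_false_eq_true, zero_pow, sub_zero, mul_div_cancel₀ _ hk] at h
  rw [h, ← lintegral_const_mul' _ _ (by simp)]
  refine lintegral_congr fun t ↦ ?_
  change μ (Ioi t) * _ = _
  rw [ENNReal.ofReal_mul (by positivity), ENNReal.ofReal_add (by positivity) zero_le_one,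
    ENNReal.ofReal_natCast, ENNReal.ofReal_one]
  ring

lemma measurable_measure_Ioi (μ : Measure ℝ) : Measurable fun t ↦ μ (Ioi t) :=
  Antitone.measurable fun _ _ h ↦ measure_mono (Ioi_subset_Ioi h)

lemma ae_nonneg_of_measure_Iio_eq_zero {μ : Measure ℝ} (h : μ (Iio 0) = 0) : ∀ᵐ x ∂μ, 0 ≤ x :=
  (measure_eq_zero_iff_ae_notMem.1 h).mono fun _ hx ↦ not_lt.1 hx

section NBUE

variable {P : Measure ℝ} (h0 : ∀ᵐ x ∂P, 0 ≤ x) (hint : Integrable id P)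
include h0 hint

lemma ofReal_integral_id_eq_lintegral_measure_Ioi :
    ENNReal.ofReal (∫ x, x ∂P) = ∫⁻ t in Ioi 0, P (Ioi t) :=
  (ofReal_integral_eq_lintegral_ofReal hint h0).trans
    (lintegral_eq_lintegral_meas_lt P h0 aemeasurable_id)

variable
  (hNBUE : ∀ t ≥ (0 : ℝ), ∫ x in Ioi t, (P (Ioi x)).toReal ≤ (∫ x, x ∂P) * (P (Ioi t)).toReal)
include hNBUE

lemma lintegral_measure_Ioi_le_of_nbue [IsFiniteMeasure P] {t : ℝ} (ht : 0 ≤ t) :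
    ∫⁻ x in Ioi t, P (Ioi x) ≤ ENNReal.ofReal (∫ x, x ∂P) * P (Ioi t) := by
  have hfin : ∫⁻ x in Ioi t, P (Ioi x) ≠ ∞ := by
    refine ne_top_of_le_ne_top ?_ (lintegral_mono_set (Ioi_subset_Ioi ht))
    rw [← ofReal_integral_id_eq_lintegral_measure_Ioi h0 hint]
    exact ENNReal.ofReal_ne_top
  rw [← ENNReal.toReal_le_toReal hfin (by finiteness), ENNReal.toReal_mul,
    ENNReal.toReal_ofReal (integral_nonneg_of_ae h0), ← integral_toReal
      (measurable_measure_Ioi P).aemeasurable (ae_of_all _ fun x ↦ measure_lt_top P _)]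
  exact hNBUE t ht

lemma lintegral_measure_Ioi_mul_pow_succ_le_of_nbue [IsFiniteMeasure P] (k : ℕ) :
    ∫⁻ t in Ioi 0, P (Ioi t) * ENNReal.ofReal (t ^ (k + 1))
      ≤ ENNReal.ofReal (∫ x, x ∂P) * ∫⁻ x, ENNReal.ofReal (x ^ (k + 1)) ∂P := by
  set ν := (volume.restrict (Ioi (0 : ℝ))).withDensity fun x ↦ P (Ioi x)
  have hν0 : ∀ᵐ x ∂ν, 0 ≤ x := (withDensity_absolutelyContinuous _ _).ae_le
    (ae_restrict_of_forall_mem measurableSet_Ioi fun x (hx : 0 < x) ↦ hx.le)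
  have hνIoi {t : ℝ} (ht : 0 ≤ t) : ν (Ioi t) = ∫⁻ x in Ioi t, P (Ioi x) := by
    rw [withDensity_apply _ measurableSet_Ioi, Measure.restrict_restrict measurableSet_Ioi,
      Ioi_inter_Ioi, max_eq_left ht]
  calc ∫⁻ t in Ioi 0, P (Ioi t) * ENNReal.ofReal (t ^ (k + 1))
      = ∫⁻ x, ENNReal.ofReal (x ^ (k + 1)) ∂ν :=
        (lintegral_withDensity_eq_lintegral_mul _ (measurable_measure_Ioi P) (by fun_prop)).symm
    _ = (k + 1) * ∫⁻ t in Ioi 0, ν (Ioi t) * ENNReal.ofReal (t ^ k) :=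
        lintegral_ofReal_pow_succ_eq hν0 k
    _ ≤ (k + 1) * ∫⁻ t in Ioi 0,
          ENNReal.ofReal (∫ x, x ∂P) * P (Ioi t) * ENNReal.ofReal (t ^ k) := by
        gcongr (k + 1) * ?_
        refine setLIntegral_mono' measurableSet_Ioi fun t (ht : 0 < t) ↦ ?_
        rw [hνIoi ht.le]
        gcongr
        exact lintegral_measure_Ioi_le_of_nbue h0 hint hNBUE ht.le
    _ = ENNReal.ofReal (∫ x, x ∂P) * ∫⁻ x, ENNReal.ofReal (x ^ (k + 1)) ∂P := by
        simp_rw [lintegral_ofReal_pow_succ_eq h0 k, mul_assoc]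
        rw [lintegral_const_mul' _ _ ENNReal.ofReal_ne_top]
        ring

theorem lintegral_pow_le_factorial_mul_of_nbue [IsProbabilityMeasure P] (k : ℕ) :
    ∫⁻ x, ENNReal.ofReal (x ^ k) ∂P ≤ k ! * ENNReal.ofReal (∫ x, x ∂P) ^ k := by
  set m := ENNReal.ofReal (∫ x, x ∂P)
  have hsucc (k : ℕ) : ∫⁻ x, ENNReal.ofReal (x ^ (k + 1)) ∂P ≤ (k + 1)! * m ^ (k + 1) := by
    induction k with
    | zero => simpa [m] using (ofReal_integral_eq_lintegral_ofReal hint h0).ge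
    | succ k ih =>
      calc ∫⁻ x, ENNReal.ofReal (x ^ (k + 2)) ∂P
          = (k + 2) * ∫⁻ t in Ioi 0, P (Ioi t) * ENNReal.ofReal (t ^ (k + 1)) := by
            rw [lintegral_ofReal_pow_succ_eq h0 (k + 1)]
            push_cast
            ring
        _ ≤ (k + 2) * (m * ((k + 1)! * m ^ (k + 1))) := by
            gcongr
            exact (lintegral_measure_Ioi_mul_pow_succ_le_of_nbue h0 hint hNBUE k).trans
              (by gcongr)
        _ = (k + 2)! * m ^ (k + 2) := by
            push_cast [Nat.factorial_succ (k + 1)]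
            ring
  cases k with
  | zero => simp
  | succ k => exact hsucc k

end NBUE

theorem nbue_determined_by_moments_general
    (P Q : Measure ℝ) [IsProbabilityMeasure P] [IsProbabilityMeasure Q]
    (hP0 : P (Iio 0) = 0) (hQ0 : Q (Iio 0) = 0)
    (hPint : Integrable id P) (hQint : Integrable id Q)
    (μP μQ : ℝ) (hμP : μP = ∫ x, x ∂P) (hμQ : μQ = ∫ x, x ∂Q)
    (hPNBUE : ∀ t ≥ (0:ℝ), ∫ x in Ioi t, (P (Ioi x)).toReal ≤ μP * (P (Ioi t)).toReal)
    (hQNBUE : ∀ t ≥ (0:ℝ), ∫ x in Ioi t, (Q (Ioi x)).toReal ≤ μQ * (Q (Ioi t)).toReal)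
    (hmom : ∀ k : ℕ, 0 < k → ∫ x, x ^ k ∂P = ∫ x, x ^ k ∂Q) :
    P = Q := by
  subst hμP hμQ
  have hP := ae_nonneg_of_measure_Iio_eq_zero hP0
  have hQ := ae_nonneg_of_measure_Iio_eq_zero hQ0
  refine Measure.ext_of_moment_eq
    (zero_mem_interior_integrableExpSet_of_lintegral_pow_le hP
      (lintegral_pow_le_factorial_mul_of_nbue hP hPint hPNBUE))
    (zero_mem_interior_integrableExpSet_of_lintegral_pow_le hQ
      (lintegral_pow_le_factorial_mul_of_nbue hQ hQint hQNBUE)) fun k ↦ ?_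
  rcases k.eq_zero_or_pos with rfl | hk
  · simp
  · exact hmom k hk

/-- An NBUE life distribution is uniquely determined by its moment sequence: if `P` and
`Q` are both NBUE with the same moments of all positive integer orders, then `P = Q`. -/
theorem nbue_determined_by_moments
    (P Q : Measure ℝ) [IsProbabilityMeasure P] [IsProbabilityMeasure Q]
    (hP0 : P (Iio 0) = 0) (hQ0 : Q (Iio 0) = 0)
    (hPint : Integrable id P) (hQint : Integrable id Q)
    (μP μQ : ℝ) (hμP : μP = ∫ x, x ∂P) (hμQ : μQ = ∫ x, x ∂Q)
    (hμPpos : 0 < μP) (hμQpos : 0 < μQ)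
    (hPNBUE : ∀ t ≥ (0:ℝ), ∫ x in Ioi t, (P (Ioi x)).toReal ≤ μP * (P (Ioi t)).toReal)
    (hQNBUE : ∀ t ≥ (0:ℝ), ∫ x in Ioi t, (Q (Ioi x)).toReal ≤ μQ * (Q (Ioi t)).toReal)
    (hmom : ∀ k : ℕ, 0 < k → ∫ x, x ^ k ∂P = ∫ x, x ^ k ∂Q) :
    P = Q :=
  nbue_determined_by_moments_general P Q hP0 hQ0 hPint hQint μP μQ hμP hμQ hPNBUE hQNBUE hmom
end

section
/- For the life distribution with survival function F̄(x) = 25/(5+x)^2 on [0,1], (75/(2·54^9))·(55-x)^8 on [1,28], and (25/(9·2^10))·exp((28-x)/3) on [28,∞), the second moment E[X^2] = 2∫_0^∞ x·F̄(x) dx exceeds 2μ^2 = 50, where μ = 5 is the mean; hence the NBUE moment bound E[X^2] ≤ Γ(3)·μ^2 fails for this NWBUE distribution. -/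
/-!
The survival function is piecewise elementary, so the mean and `∫ x F̄(x) dx` split over
`(0, 1]`, `(1, 28]`, `(28, ∞)` into integrals with explicit antiderivatives. The mean comes out
as exactly `5`, while `∫ x F̄(x) dx = 25 log (6/5) + 46085/2048`, which exceeds `25` because
`log (6/5) ≥ 1 - 5/6`.
-/

open MeasureTheory Set Filter Real Topology

theorem integral_Ioi_eq_of_eqOn_Ioc_Ioc_Ioi {E : Type*} [NormedAddCommGroup E]
    [NormedSpace ℝ E] {f g₁ g₂ g₃ : ℝ → E} {a b c : ℝ} (hab : a ≤ b) (hbc : b ≤ c)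
    (h₁ : EqOn f g₁ (Ioc a b)) (h₂ : EqOn f g₂ (Ioc b c)) (h₃ : EqOn f g₃ (Ioi c))
    (hg₁ : IntervalIntegrable g₁ volume a b) (hg₂ : IntervalIntegrable g₂ volume b c)
    (hg₃ : IntegrableOn g₃ (Ioi c)) :
    ∫ x in Ioi a, f x = (∫ x in a..b, g₁ x) + (∫ x in b..c, g₂ x) + ∫ x in Ioi c, g₃ x := by
  rw [intervalIntegrable_iff_integrableOn_Ioc_of_le hab] at hg₁
  rw [intervalIntegrable_iff_integrableOn_Ioc_of_le hbc] at hg₂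
  have hf₁ := hg₁.congr_fun h₁.symm measurableSet_Ioc
  have hf₂ := hg₂.congr_fun h₂.symm measurableSet_Ioc
  have hf₃ := hg₃.congr_fun h₃.symm measurableSet_Ioi
  have hf₂₃ : IntegrableOn f (Ioi b) := Ioc_union_Ioi_eq_Ioi hbc ▸ hf₂.union hf₃
  rw [← Ioc_union_Ioi_eq_Ioi hab,
    setIntegral_union Ioc_disjoint_Ioi_same measurableSet_Ioi hf₁ hf₂₃,
    ← Ioc_union_Ioi_eq_Ioi hbc,
    setIntegral_union Ioc_disjoint_Ioi_same measurableSet_Ioi hf₂ hf₃,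
    intervalIntegral.integral_of_le hab, intervalIntegral.integral_of_le hbc,
    setIntegral_congr_fun measurableSet_Ioc h₁, setIntegral_congr_fun measurableSet_Ioc h₂,
    setIntegral_congr_fun measurableSet_Ioi h₃, add_assoc]

section InvAddSq

variable {k a b : ℝ}

theorem intervalIntegrable_inv_add_sq (hk : ∀ x ∈ uIcc a b, k + x ≠ 0) :
    IntervalIntegrable (fun x => ((k + x) ^ 2)⁻¹) volume a b :=
  (ContinuousOn.inv₀ (by fun_prop) fun x hx => pow_ne_zero 2 (hk x hx)).intervalIntegrable

theorem integral_inv_add_sq (hk : ∀ x ∈ uIcc a b, k + x ≠ 0) :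
    ∫ x in a..b, ((k + x) ^ 2)⁻¹ = (k + a)⁻¹ - (k + b)⁻¹ := by
  have hderiv : ∀ x ∈ uIcc a b, HasDerivAt (fun y => -(k + y)⁻¹) ((k + x) ^ 2)⁻¹ x := by
    intro x hx
    refine (((hasDerivAt_id' x).const_add k).inv (hk x hx)).neg.congr_deriv ?_
    ring
  rw [intervalIntegral.integral_eq_sub_of_hasDerivAt hderiv (intervalIntegrable_inv_add_sq hk)]
  ring

theorem integral_mul_inv_add_sq (hk : ∀ x ∈ uIcc a b, k + x ≠ 0) :
    ∫ x in a..b, x * ((k + x) ^ 2)⁻¹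
      = log (k + b) - log (k + a) + k * (k + b)⁻¹ - k * (k + a)⁻¹ := by
  have hderiv : ∀ x ∈ uIcc a b,
      HasDerivAt (fun y => log (k + y) + k * (k + y)⁻¹) (x * ((k + x) ^ 2)⁻¹) x := by
    intro x hx
    have hx' := hk x hx
    refine ((((hasDerivAt_id' x).const_add k).log hx').add
      ((((hasDerivAt_id' x).const_add k).inv hx').const_mul k)).congr_deriv ?_
    field_simp
    ring
  rw [intervalIntegral.integral_eq_sub_of_hasDerivAt hderiv
    ((intervalIntegrable_inv_add_sq hk).continuousOn_mul continuousOn_id)]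
  ring

end InvAddSq

theorem integral_sub_pow (a b d : ℝ) (n : ℕ) :
    ∫ x in a..b, (d - x) ^ n = ((d - a) ^ (n + 1) - (d - b) ^ (n + 1)) / (n + 1) := by
  rw [intervalIntegral.integral_comp_sub_left (fun x => x ^ n), integral_pow]

theorem integral_mul_sub_pow (a b d : ℝ) (n : ℕ) :
    ∫ x in a..b, x * (d - x) ^ n
      = d * ((d - a) ^ (n + 1) - (d - b) ^ (n + 1)) / (n + 1)
        - ((d - a) ^ (n + 2) - (d - b) ^ (n + 2)) / (n + 2) := by
  have h : ∀ x : ℝ, x * (d - x) ^ n = d * (d - x) ^ n - (d - x) ^ (n + 1) := fun x => by ring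
  simp_rw [h]
  rw [intervalIntegral.integral_sub, intervalIntegral.integral_const_mul, integral_sub_pow,
    integral_sub_pow]
  · push_cast
    ring
  all_goals exact (by fun_prop : Continuous _).intervalIntegrable _ _

section ExpTail

variable {a θ : ℝ}

theorem tendsto_exp_sub_div_atTop (hθ : 0 < θ) :
    Tendsto (fun x => exp ((a - x) / θ)) atTop (𝓝 0) :=
  tendsto_exp_atBot.comp <| Tendsto.atBot_div_const hθ <|
    tendsto_atBot_add_const_left _ a tendsto_neg_atTop_atBot

theorem tendsto_mul_exp_sub_div_atTop (hθ : 0 < θ) :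
    Tendsto (fun x => -θ * (x + θ) * exp ((a - x) / θ)) atTop (𝓝 0) := by
  have hu : Tendsto (fun x => (x - a) / θ) atTop atTop :=
    (tendsto_atTop_add_const_right _ (-a) tendsto_id).atTop_div_const hθ
  have hlim : Tendsto (fun u => -θ * (θ * (u ^ 1 * exp (-u)) + (a + θ) * exp (-u)))
      atTop (𝓝 0) := by
    simpa using ((tendsto_pow_mul_exp_neg_atTop_nhds_zero 1).const_mul θ).add
      (tendsto_exp_neg_atTop_nhds_zero.const_mul (a + θ)) |>.const_mul (-θ)
  refine (hlim.comp hu).congr fun x => ?_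
  rw [Function.comp_apply, show -((x - a) / θ) = (a - x) / θ by ring]
  field_simp
  ring

theorem hasDerivAt_exp_sub_div (hθ : θ ≠ 0) (x : ℝ) :
    HasDerivAt (fun y => -θ * exp ((a - y) / θ)) (exp ((a - x) / θ)) x := by
  refine ((((hasDerivAt_id' x).const_sub a).div_const θ).exp.const_mul (-θ)).congr_deriv ?_
  field_simp

theorem hasDerivAt_mul_exp_sub_div (hθ : θ ≠ 0) (x : ℝ) :
    HasDerivAt (fun y => -θ * (y + θ) * exp ((a - y) / θ)) (x * exp ((a - x) / θ)) x := by
  refine ((((hasDerivAt_id' x).add_const θ).const_mul (-θ)).mul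
    (((hasDerivAt_id' x).const_sub a).div_const θ).exp).congr_deriv ?_
  field_simp
  ring

theorem integrableOn_exp_sub_div (hθ : 0 < θ) :
    IntegrableOn (fun x => exp ((a - x) / θ)) (Ioi a) :=
  integrableOn_Ioi_deriv_of_nonneg' (fun x _ => hasDerivAt_exp_sub_div hθ.ne' x)
    (fun _ _ => (exp_pos _).le) ((tendsto_exp_sub_div_atTop hθ).const_mul (-θ))

theorem integral_exp_sub_div (hθ : 0 < θ) :
    ∫ x in Ioi a, exp ((a - x) / θ) = θ := by
  rw [integral_Ioi_of_hasDerivAt_of_nonneg' (fun x _ => hasDerivAt_exp_sub_div hθ.ne' x)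
    (fun _ _ => (exp_pos _).le) ((tendsto_exp_sub_div_atTop hθ).const_mul (-θ))]
  simp

theorem integrableOn_mul_exp_sub_div (ha : 0 ≤ a) (hθ : 0 < θ) :
    IntegrableOn (fun x => x * exp ((a - x) / θ)) (Ioi a) :=
  integrableOn_Ioi_deriv_of_nonneg' (fun x _ => hasDerivAt_mul_exp_sub_div hθ.ne' x)
    (fun _ hx => mul_nonneg (ha.trans hx.out.le) (exp_pos _).le)
    (tendsto_mul_exp_sub_div_atTop hθ)

theorem integral_mul_exp_sub_div (ha : 0 ≤ a) (hθ : 0 < θ) :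
    ∫ x in Ioi a, x * exp ((a - x) / θ) = θ * (a + θ) := by
  rw [integral_Ioi_of_hasDerivAt_of_nonneg' (fun x _ => hasDerivAt_mul_exp_sub_div hθ.ne' x)
    (fun _ hx => mul_nonneg (ha.trans hx.out.le) (exp_pos _).le)
    (tendsto_mul_exp_sub_div_atTop hθ)]
  simp

end ExpTail

noncomputable def example31Survival (x : ℝ) : ℝ :=
  if x ≤ 1 then 25 / (5 + x) ^ 2
  else if x ≤ 28 then 75 / (2 * 54 ^ 9) * (55 - x) ^ 8
  else 25 / (9 * 2 ^ 10) * exp ((28 - x) / 3)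

namespace example31Survival

theorem eqOn_Ioc_zero_one :
    EqOn example31Survival (fun x => 25 * ((5 + x) ^ 2)⁻¹) (Ioc 0 1) := fun x hx => by
  rw [example31Survival, if_pos hx.2, div_eq_mul_inv]

theorem eqOn_Ioc_one_twentyEight :
    EqOn example31Survival (fun x => 75 / (2 * 54 ^ 9) * (55 - x) ^ 8) (Ioc 1 28) :=
  fun x hx => by rw [example31Survival, if_neg hx.1.not_ge, if_pos hx.2]

theorem eqOn_Ioi_twentyEight :
    EqOn example31Survival (fun x => 25 / (9 * 2 ^ 10) * exp ((28 - x) / 3)) (Ioi 28) :=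
  fun x hx => by
    rw [example31Survival, if_neg (by linarith [hx.out] : ¬x ≤ 1), if_neg hx.out.not_ge]

theorem five_add_ne_zero_of_mem_uIcc : ∀ x ∈ uIcc (0 : ℝ) 1, 5 + x ≠ 0 := fun x hx => by
  rw [uIcc_of_le zero_le_one] at hx
  linarith [hx.1]

theorem integral_Ioi_zero : ∫ x in Ioi 0, example31Survival x = 5 := by
  rw [integral_Ioi_eq_of_eqOn_Ioc_Ioc_Ioi zero_le_one (by norm_num) eqOn_Ioc_zero_one
      eqOn_Ioc_one_twentyEight eqOn_Ioi_twentyEight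
      ((intervalIntegrable_inv_add_sq five_add_ne_zero_of_mem_uIcc).const_mul _)
      ((by fun_prop : Continuous _).intervalIntegrable _ _)
      ((integrableOn_exp_sub_div three_pos).const_mul _),
    intervalIntegral.integral_const_mul, intervalIntegral.integral_const_mul, integral_const_mul,
    integral_inv_add_sq five_add_ne_zero_of_mem_uIcc, integral_sub_pow,
    integral_exp_sub_div three_pos]
  norm_num

theorem integral_Ioi_zero_mul :
    ∫ x in Ioi 0, x * example31Survival x = 25 * (log 6 - log 5) + 46085 / 2048 := by
  have h₁ : EqOn (fun x => x * example31Survival x) (fun x => 25 * (x * ((5 + x) ^ 2)⁻¹))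
      (Ioc 0 1) := fun x hx => by simp only [eqOn_Ioc_zero_one hx]; ring
  have h₂ : EqOn (fun x => x * example31Survival x)
      (fun x => 75 / (2 * 54 ^ 9) * (x * (55 - x) ^ 8)) (Ioc 1 28) := fun x hx => by
    simp only [eqOn_Ioc_one_twentyEight hx]; ring
  have h₃ : EqOn (fun x => x * example31Survival x)
      (fun x => 25 / (9 * 2 ^ 10) * (x * exp ((28 - x) / 3))) (Ioi 28) := fun x hx => by
    simp only [eqOn_Ioi_twentyEight hx]; ring
  rw [integral_Ioi_eq_of_eqOn_Ioc_Ioc_Ioi zero_le_one (by norm_num) h₁ h₂ h₃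
      (((intervalIntegrable_inv_add_sq five_add_ne_zero_of_mem_uIcc).continuousOn_mul
        continuousOn_id).const_mul _)
      ((by fun_prop : Continuous _).intervalIntegrable _ _)
      ((integrableOn_mul_exp_sub_div (by norm_num) three_pos).const_mul _),
    intervalIntegral.integral_const_mul, intervalIntegral.integral_const_mul, integral_const_mul,
    integral_mul_inv_add_sq five_add_ne_zero_of_mem_uIcc, integral_mul_sub_pow,
    integral_mul_exp_sub_div (by norm_num) three_pos]
  norm_num
  ring

end example31Survival

/-- For the NWBUE distribution of Example 3.1 with mean `μ = 5`, the second moment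
`E[X²] = 2∫_0^∞ x F̄(x) dx` exceeds `2μ² = 50`, so the NBUE moment bound
`E[X²] ≤ Γ(3) μ²` fails. -/
theorem example31_moment_bound_fails
    (Fbar : ℝ → ℝ)
    (hF : ∀ x, Fbar x =
      if x ≤ 1 then 25 / (5 + x) ^ 2
      else if x ≤ 28 then 75 / (2 * 54 ^ 9) * (55 - x) ^ 8
      else 25 / (9 * 2 ^ 10) * Real.exp ((28 - x) / 3)) :
    (∫ x in Ioi (0:ℝ), Fbar x = 5) ∧
      (2 * 5 ^ 2 < 2 * ∫ x in Ioi (0:ℝ), x * Fbar x) ∧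
      ¬ (2 * ∫ x in Ioi (0:ℝ), x * Fbar x ≤ Real.Gamma 3 * 5 ^ 2) := by
  obtain rfl : Fbar = example31Survival := funext hF
  have hlog : 1 / 6 ≤ log 6 - log 5 := by
    have := one_sub_inv_le_log_of_pos (by norm_num : (0 : ℝ) < 6 / 5)
    rw [log_div (by norm_num) (by norm_num)] at this
    linarith
  have hmoment : 2 * 5 ^ 2 < 2 * ∫ x in Ioi (0:ℝ), x * example31Survival x := by
    rw [example31Survival.integral_Ioi_zero_mul]
    linarith
  refine ⟨example31Survival.integral_Ioi_zero, hmoment, ?_⟩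
  rw [Gamma_ofNat_eq_factorial 2, not_le]
  simpa using hmoment
end

section
/- The distribution G with MRL function e_G(x) = x+2 on [0,2], (10-x)/2 on [2,4], 3 on [4,∞) is IDMRL with change point τ_0 = 2 (e_G increasing on [0,2], decreasing on [2,∞)), but is not NWBUE: e_G(x) ≥ e_G(0) = 2 for all x ≥ 0, and e_G(x) > 2 for all x > 0, so there is no change point x_0 with e_G(x) ≤ e_G(0) for x ≥ x_0. -/
open Set

/-- Example 3.3: the distribution with MRL `e_G` is IDMRL with change point `τ₀ = 2`
(nondecreasing on `[0,2]`, nonincreasing on `[2,∞)`), but is not NWBUE: `e_G(0) = 2`,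
`e_G(x) ≥ 2` for all `x ≥ 0`, `e_G(x) > 2` for all `x > 0`, and there is no change
point `x₀ ≥ 0` with `e_G(t) ≥ e_G(0)` for `t < x₀` and `e_G(t) ≤ e_G(0)` for `t ≥ x₀`. -/
theorem example33_idmrl_not_nwbue
    (eG : ℝ → ℝ)
    (he : ∀ x, eG x =
      if x ≤ 2 then x + 2
      else if x ≤ 4 then (10 - x) / 2
      else 3) :
    MonotoneOn eG (Icc 0 2) ∧ AntitoneOn eG (Ici 2) ∧ eG 0 = 2 ∧
      (∀ x, 0 ≤ x → 2 ≤ eG x) ∧ (∀ x, 0 < x → 2 < eG x) ∧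
      ¬ ∃ x₀ ≥ (0:ℝ), (∀ t, 0 ≤ t → t < x₀ → eG 0 ≤ eG t) ∧
        (∀ t, x₀ ≤ t → eG t ≤ eG 0) := by
  have hgt : ∀ x, 0 < x → 2 < eG x := by
    intro x hx
    rw [he x]
    split_ifs with h1 h2 <;> linarith
  refine ⟨?_, ?_, ?_, ?_, hgt, ?_⟩
  · intro a ha b hb hab
    rw [he a, he b, if_pos ha.2, if_pos hb.2]
    linarith
  · intro a ha b hb hab
    simp only [mem_Ici] at ha hb
    rw [he a, he b]
    split_ifs with h1 h2 h3 h4 h5 <;> linarith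
  · rw [he 0]; norm_num
  · intro x hx
    rw [he x]
    split_ifs with h1 h2 <;> linarith
  · rintro ⟨x₀, hx₀, _, h2⟩
    have h3 := h2 (max x₀ 3) (le_max_left _ _)
    have h4 := hgt (max x₀ 3) (by positivity)
    rw [he 0] at h3
    norm_num at h3
    linarith
end

section
/- The function F̄(x) = 4/(2+x)^2 for 0 ≤ x < 1, F̄(x) = (2/27)·(7-x) for 1 ≤ x < 3, and F̄(x) = (2x(3+x)^2/729)·exp(3-x) for x ≥ 3 is a valid survival function (F̄(0)=1, continuous, nonincreasing, tending to 0), and its MRL function is e_F(x) = 2+x on [0,1), (7-x)/2 on [1,3), and 1 + 3/x on [3,∞). -/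
/-!
On each of the three pieces `F̄ = -S'` for an explicit `S` tending to `0`, namely
`S x = 4 / (2 + x)` on `[0, 1]`, `(7 - x)^2 / 27` on `[1, 3]` and `2 (x + 3)^3 e^{3 - x} / 729`
on `[3, ∞)`. These agree at `1` and `3`, so integrating from the right piece by piece gives
`∫_x^∞ F̄ = S x`, and `S / F̄` is the stated mean residual life.
-/

open MeasureTheory Set Filter Topology Polynomial

theorem tendsto_eval_mul_exp_sub_atTop (p : ℝ[X]) (c : ℝ) :
    Tendsto (fun t => p.eval t * Real.exp (c - t)) atTop (𝓝 0) := by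
  refine (tendsto_div_exp_atTop (C (Real.exp c) * p)).congr fun t => ?_
  rw [eval_mul, eval_C, Real.exp_sub]
  ring

theorem integrableOn_Ioi_of_intervalIntegrable {f : ℝ → ℝ} {a b : ℝ} (hab : a ≤ b)
    (hf : IntervalIntegrable f volume a b) (hb : IntegrableOn f (Ioi b)) :
    IntegrableOn f (Ioi a) := by
  rw [← Ioc_union_Ioi_eq_Ioi hab]
  exact hf.1.union hb

theorem integral_Ioi_eq_sub_add_integral_Ioi {f S : ℝ → ℝ} {a b : ℝ} (hab : a ≤ b)
    (hS : ∀ t ∈ Icc a b, HasDerivAt S (-f t) t) (hf : IntervalIntegrable f volume a b)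
    (hb : IntegrableOn f (Ioi b)) :
    ∫ t in Ioi a, f t = S a - S b + ∫ t in Ioi b, f t := by
  rw [← Ioc_union_Ioi_eq_Ioi hab,
    setIntegral_union (Ioc_disjoint_Ioi le_rfl) measurableSet_Ioi hf.1 hb,
    ← intervalIntegral.integral_of_le hab,
    intervalIntegral.integral_eq_sub_of_hasDerivAt (f := fun t => -S t)
      (fun t ht => (hS t (uIcc_of_le hab ▸ ht)).neg.congr_deriv (neg_neg _)) hf]
  ring

namespace Example34

noncomputable def survival (x : ℝ) : ℝ :=
  if x < 1 then 4 / (2 + x) ^ 2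
  else if x < 3 then 2 / 27 * (7 - x)
  else 2 * x * (3 + x) ^ 2 / 729 * Real.exp (3 - x)

noncomputable def mrl (x : ℝ) : ℝ :=
  if x < 1 then 2 + x
  else if x < 3 then (7 - x) / 2
  else 1 + 3 / x

theorem survival_zero : survival 0 = 1 := by
  norm_num [survival]

theorem survival_of_le_one {x : ℝ} (hx : x ≤ 1) : survival x = 4 / (2 + x) ^ 2 := by
  rcases hx.lt_or_eq with hx | rfl
  · simp [survival, hx]
  · norm_num [survival]

theorem survival_of_mem_Icc {x : ℝ} (h1 : 1 ≤ x) (h3 : x ≤ 3) :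
    survival x = 2 / 27 * (7 - x) := by
  rcases h3.lt_or_eq with h3 | rfl
  · simp [survival, h1.not_gt, h3]
  · norm_num [survival]

theorem survival_of_three_le {x : ℝ} (hx : 3 ≤ x) :
    survival x = 2 * x * (3 + x) ^ 2 / 729 * Real.exp (3 - x) := by
  simp [survival, hx.not_gt, (by linarith : ¬ x < 1)]

theorem hasDerivAt_survival_piece (t : ℝ) :
    HasDerivAt (fun t => 2 * t * (3 + t) ^ 2 / 729 * Real.exp (3 - t))
      (2 * (3 + t) * (3 - t ^ 2) / 729 * Real.exp (3 - t)) t := by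
  refine ((((hasDerivAt_id' t).const_mul 2).fun_mul
    (((hasDerivAt_id' t).const_add 3).fun_pow 2)).div_const 729).fun_mul
    ((hasDerivAt_id' t).const_sub 3).exp |>.congr_deriv ?_
  norm_num
  ring

theorem hasDerivAt_neg_tail (t : ℝ) :
    HasDerivAt (fun t => -(2 * (t + 3) ^ 3 / 729 * Real.exp (3 - t)))
      (2 * t * (3 + t) ^ 2 / 729 * Real.exp (3 - t)) t := by
  refine (((((hasDerivAt_id' t).add_const 3).fun_pow 3).const_mul 2).div_const 729).fun_mul
    ((hasDerivAt_id' t).const_sub 3).exp |>.fun_neg |>.congr_deriv ?_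
  norm_num
  ring

theorem tendsto_neg_tail_atTop :
    Tendsto (fun t => -(2 * (t + 3) ^ 3 / 729 * Real.exp (3 - t))) atTop (𝓝 0) := by
  refine (tendsto_eval_mul_exp_sub_atTop (C (-2 / 729) * (X + C 3) ^ 3) 3).congr fun t => ?_
  simp only [eval_mul, eval_pow, eval_add, eval_C, eval_X]
  ring

theorem tendsto_survival_atTop : Tendsto survival atTop (𝓝 0) := by
  refine (tendsto_eval_mul_exp_sub_atTop (C (2 / 729) * X * (C 3 + X) ^ 2) 3).congr' ?_
  filter_upwards [eventually_ge_atTop 3] with t ht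
  simp only [survival_of_three_le ht, eval_mul, eval_pow, eval_add, eval_C, eval_X]
  ring

theorem continuousOn_survival : ContinuousOn survival (Ici 0) := by
  have h_low : ContinuousOn survival (Icc 0 1) := by
    refine ContinuousOn.congr ?_ fun x hx => survival_of_le_one hx.2
    exact continuousOn_const.div (by fun_prop) fun x hx => by
      have hx0 : 0 ≤ x := hx.1
      positivity
  have h_mid : ContinuousOn survival (Icc 1 3) :=
    ContinuousOn.congr (by fun_prop) fun x hx => survival_of_mem_Icc hx.1 hx.2
  have h_tail : ContinuousOn survival (Ici 3) :=
    ContinuousOn.congr (by fun_prop) fun x hx => survival_of_three_le hx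
  have h_high : ContinuousOn survival (Ici 1) := by
    rw [← Icc_union_Ici_eq_Ici (by norm_num : (1 : ℝ) ≤ 3)]
    exact h_mid.union_of_isClosed h_tail isClosed_Icc isClosed_Ici
  rw [← Icc_union_Ici_eq_Ici (zero_le_one : (0 : ℝ) ≤ 1)]
  exact h_low.union_of_isClosed h_high isClosed_Icc isClosed_Ici

theorem antitoneOn_survival_piece :
    AntitoneOn (fun t => 2 * t * (3 + t) ^ 2 / 729 * Real.exp (3 - t)) (Ici 3) := by
  refine antitoneOn_of_deriv_nonpos (convex_Ici 3)
    (fun x _ => (hasDerivAt_survival_piece x).continuousAt.continuousWithinAt)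
    (fun x _ => (hasDerivAt_survival_piece x).differentiableAt.differentiableWithinAt)
    fun x hx => ?_
  have hx : 3 < x := by simpa using hx
  have hpoly : 2 * (3 + x) * (3 - x ^ 2) ≤ 0 :=
    mul_nonpos_of_nonneg_of_nonpos (by linarith) (by nlinarith)
  rw [(hasDerivAt_survival_piece x).deriv]
  exact mul_nonpos_of_nonpos_of_nonneg (by linarith) (Real.exp_pos _).le

theorem antitoneOn_survival : AntitoneOn survival (Ici 0) := by
  have h_low : AntitoneOn survival (Icc 0 1) := fun a ha b hb hab => by
    rw [survival_of_le_one ha.2, survival_of_le_one hb.2]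
    have ha0 : 0 ≤ a := ha.1
    gcongr
  have h_mid : AntitoneOn survival (Icc 1 3) := fun a ha b hb hab => by
    rw [survival_of_mem_Icc ha.1 ha.2, survival_of_mem_Icc hb.1 hb.2]
    linarith
  have h_tail : AntitoneOn survival (Ici 3) :=
    antitoneOn_survival_piece.congr fun x hx => (survival_of_three_le hx).symm
  have h_high : AntitoneOn survival (Ici 1) := by
    rw [← Icc_union_Ici_eq_Ici (by norm_num : (1 : ℝ) ≤ 3)]
    exact h_mid.union_right h_tail (isGreatest_Icc (by norm_num)) isLeast_Ici
  rw [← Icc_union_Ici_eq_Ici (zero_le_one : (0 : ℝ) ≤ 1)]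
  exact h_low.union_right h_high (isGreatest_Icc zero_le_one) isLeast_Ici

theorem intervalIntegrable_survival {a b : ℝ} (ha : 0 ≤ a) (hb : 0 ≤ b) :
    IntervalIntegrable survival volume a b :=
  (continuousOn_survival.mono fun _ ht => le_trans (le_min ha hb) ht.1).intervalIntegrable

theorem integrableOn_Ioi_three : IntegrableOn survival (Ioi 3) := by
  refine (integrableOn_Ioi_deriv_of_nonneg' (fun t _ => hasDerivAt_neg_tail t) (fun t ht => ?_)
    tendsto_neg_tail_atTop).congr_fun (fun t ht => (survival_of_three_le ht.out.le).symm)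
    measurableSet_Ioi
  have ht0 : 0 < t := by linarith [ht.out]
  positivity

theorem integrableOn_Ioi_survival {x : ℝ} (hx : 0 ≤ x) : IntegrableOn survival (Ioi x) := by
  rcases le_total x 3 with hx3 | hx3
  · exact integrableOn_Ioi_of_intervalIntegrable hx3 (intervalIntegrable_survival hx (by norm_num))
      integrableOn_Ioi_three
  · exact integrableOn_Ioi_three.mono_set (Ioi_subset_Ioi hx3)

theorem integral_Ioi_survival_of_three_le {x : ℝ} (hx : 3 ≤ x) :
    ∫ t in Ioi x, survival t = 2 * (x + 3) ^ 3 / 729 * Real.exp (3 - x) := by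
  rw [setIntegral_congr_fun measurableSet_Ioi
      fun t ht => survival_of_three_le (hx.trans (le_of_lt ht)),
    integral_Ioi_of_hasDerivAt_of_nonneg' (fun t _ => hasDerivAt_neg_tail t) (fun t ht => ?_)
      tendsto_neg_tail_atTop]
  · ring
  · have ht0 : 0 < t := by linarith [ht.out]
    positivity

theorem integral_Ioi_survival_of_mem_Icc {x : ℝ} (h1 : 1 ≤ x) (h3 : x ≤ 3) :
    ∫ t in Ioi x, survival t = (7 - x) ^ 2 / 27 := by
  rw [integral_Ioi_eq_sub_add_integral_Ioi h3 (S := fun t => (7 - t) ^ 2 / 27) (fun t ht => ?_)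
      (intervalIntegrable_survival (by linarith) (by norm_num)) integrableOn_Ioi_three,
    integral_Ioi_survival_of_three_le le_rfl]
  · norm_num
  · rw [survival_of_mem_Icc (h1.trans ht.1) ht.2]
    refine (((hasDerivAt_id' t).const_sub 7).fun_pow 2).div_const 27 |>.congr_deriv ?_
    norm_num
    ring

theorem integral_Ioi_survival_of_le_one {x : ℝ} (h0 : 0 ≤ x) (h1 : x ≤ 1) :
    ∫ t in Ioi x, survival t = 4 / (2 + x) := by
  rw [integral_Ioi_eq_sub_add_integral_Ioi h1 (S := fun t => 4 / (2 + t)) (fun t ht => ?_)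
      (intervalIntegrable_survival h0 zero_le_one) (integrableOn_Ioi_survival zero_le_one),
    integral_Ioi_survival_of_mem_Icc le_rfl (by norm_num)]
  · norm_num
  · have h2t : 0 < 2 + t := by linarith [ht.1]
    rw [survival_of_le_one ht.2]
    refine (hasDerivAt_const t (4 : ℝ)).div ((hasDerivAt_id' t).const_add 2) h2t.ne'
      |>.congr_deriv ?_
    ring

theorem integral_Ioi_survival_eq_mrl_mul {x : ℝ} (hx : 0 ≤ x) :
    ∫ t in Ioi x, survival t = mrl x * survival x := by
  rcases lt_or_ge x 1 with h1 | h1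
  · rw [integral_Ioi_survival_of_le_one hx h1.le, survival_of_le_one h1.le, mrl, if_pos h1]
    field_simp
  rcases lt_or_ge x 3 with h3 | h3
  · rw [integral_Ioi_survival_of_mem_Icc h1 h3.le, survival_of_mem_Icc h1 h3.le, mrl,
      if_neg h1.not_gt, if_pos h3]
    ring
  · rw [integral_Ioi_survival_of_three_le h3, survival_of_three_le h3, mrl,
      if_neg (by linarith), if_neg h3.not_gt]
    field_simp
    ring

end Example34

/-- Example 3.4: the given piecewise `F̄` is a valid survival function (`F̄(0) = 1`,
continuous, nonincreasing on `[0,∞)`, tending to `0` at `∞`), and its MRL function is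
the given piecewise `e_F`: `∫_x^∞ F̄(t) dt = e_F(x) · F̄(x)` for all `x ≥ 0`. -/
theorem example34_survival_and_mrl
    (Fbar eF : ℝ → ℝ)
    (hF : ∀ x, Fbar x =
      if x < 1 then 4 / (2 + x) ^ 2
      else if x < 3 then 2 / 27 * (7 - x)
      else 2 * x * (3 + x) ^ 2 / 729 * Real.exp (3 - x))
    (he : ∀ x, eF x =
      if x < 1 then 2 + x
      else if x < 3 then (7 - x) / 2
      else 1 + 3 / x) :
    Fbar 0 = 1 ∧ AntitoneOn Fbar (Ici 0) ∧ ContinuousOn Fbar (Ici 0) ∧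
      Tendsto Fbar atTop (nhds 0) ∧
      (∀ x ≥ (0:ℝ), ∫ t in Ioi x, Fbar t = eF x * Fbar x) := by
  obtain rfl : Fbar = Example34.survival := funext hF
  obtain rfl : eF = Example34.mrl := funext he
  exact ⟨Example34.survival_zero, Example34.antitoneOn_survival, Example34.continuousOn_survival,
    Example34.tendsto_survival_atTop,
    fun _ hx => Example34.integral_Ioi_survival_eq_mrl_mul hx⟩
end

section
/- If F_n is a sequence of NBUE life distributions converging in distribution to a continuous life distribution F with finite mean, and the means μ_n are bounded, then for every r > 0, ∫_0^∞ x^r dF_n(x) → ∫_0^∞ x^r dF(x); in particular all moments converge. -/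
/-!
Write `S(t) = P(X > t)` for the survival function. NBUE with mean at most `m` gives
`2m · S(t + 2m) ≤ ∫_t^∞ S ≤ m · S(t)`, so `S` halves every `2m` and all `Sₙ` lie below the single
exponential `2 exp(-t log 2 / 2m)`. Since `∫ x^r dP = r ∫_0^∞ S(t) t^(r-1) dt` and `Sₙ → S`
pointwise, dominated convergence gives the convergence of the moments.
-/

open MeasureTheory Set Filter

open Real Topology

lemma mul_le_setIntegral_Ioi_of_antitone {S : ℝ → ℝ} (hS : Antitone S) {t s : ℝ}
    (hS0 : ∀ x > t, 0 ≤ S x) (hint : IntegrableOn S (Ioi t)) (hs : 0 ≤ s) :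
    s * S (t + s) ≤ ∫ x in Ioi t, S x :=
  calc s * S (t + s) = ∫ _ in Ioc t (t + s), S (t + s) := by
        rw [setIntegral_const, Real.volume_real_Ioc_of_le (by linarith), add_sub_cancel_left,
          smul_eq_mul]
    _ ≤ ∫ x in Ioc t (t + s), S x :=
        setIntegral_mono_on (integrableOn_const (by simp)) (hint.mono_set Ioc_subset_Ioi_self)
          measurableSet_Ioc fun _ hx => hS hx.2
    _ ≤ ∫ x in Ioi t, S x :=
        setIntegral_mono_set hint ((ae_restrict_mem measurableSet_Ioi).mono hS0)
          Ioc_subset_Ioi_self.eventuallyLE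

lemma le_two_mul_exp_of_le_half {S : ℝ → ℝ} (hS : Antitone S) {a : ℝ} (ha : 0 < a)
    (h0 : S 0 ≤ 1) (hhalf : ∀ t ≥ 0, S (t + a) ≤ S t / 2) {t : ℝ} (ht : 0 ≤ t) :
    S t ≤ 2 * exp (-(log 2 / a) * t) := by
  have hpow : ∀ k : ℕ, S (k * a) ≤ (1 / 2) ^ k := by
    intro k
    induction k with
    | zero => simpa using h0
    | succ k ih =>
      calc S ((k + 1 : ℕ) * a) = S (k * a + a) := by push_cast; ring_nf
        _ ≤ S (k * a) / 2 := hhalf _ (by positivity)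
        _ ≤ (1 / 2) ^ (k + 1) := by rw [pow_succ]; linarith
  set k := ⌊t / a⌋₊
  have hk : t / a < k + 1 := Nat.lt_floor_add_one _
  calc S t ≤ S (k * a) := hS ((le_div_iff₀ ha).mp (Nat.floor_le (by positivity)))
    _ ≤ (1 / 2) ^ k := hpow k
    _ = exp (-(k * log 2)) := by
        rw [← Real.exp_log (by positivity : (0 : ℝ) < (1 / 2) ^ k), Real.log_pow, one_div,
          Real.log_inv, mul_neg]
    _ ≤ exp (log 2 + -(log 2 / a) * t) := by
        gcongr
        have := mul_lt_mul_of_pos_left hk (Real.log_pos one_lt_two)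
        rw [mul_div_assoc'] at this
        nlinarith [show log 2 / a * t = log 2 * t / a by ring]
    _ = 2 * exp (-(log 2 / a) * t) := by rw [Real.exp_add, Real.exp_log two_pos]

section Survival

variable (Q : Measure ℝ) [IsFiniteMeasure Q]

lemma antitone_measure_Ioi_toReal : Antitone fun t => (Q (Ioi t)).toReal :=
  fun _ _ hab => ENNReal.toReal_mono (measure_ne_top _ _) (measure_mono (Ioi_subset_Ioi hab))

lemma integrableOn_measure_Ioi_toReal (hQ0 : Q (Iio 0) = 0) (hint : Integrable id Q) :
    IntegrableOn (fun t => (Q (Ioi t)).toReal) (Ioi 0) := by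
  refine ⟨(antitone_measure_Ioi_toReal Q).measurable.aestronglyMeasurable, ?_⟩
  rw [hasFiniteIntegral_iff_ofReal (Eventually.of_forall fun _ => ENNReal.toReal_nonneg)]
  simp only [ENNReal.ofReal_toReal (measure_ne_top _ _)]
  have hnn : ∀ᵐ x ∂Q, 0 ≤ x := ae_iff.2 (by simpa [Iio] using hQ0)
  exact (lintegral_eq_lintegral_meas_lt Q hnn hint.aemeasurable).symm ▸ hint.lintegral_lt_top

end Survival

lemma measure_Ioi_toReal_le_two_mul_exp_of_nbue {Q : Measure ℝ} [IsProbabilityMeasure Q]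
    (hQ0 : Q (Iio 0) = 0) (hint : Integrable id Q) {m : ℝ} (hm : 0 < m)
    (hNBUE : ∀ t ≥ (0 : ℝ), ∫ x in Ioi t, (Q (Ioi x)).toReal ≤ m * (Q (Ioi t)).toReal)
    {t : ℝ} (ht : 0 ≤ t) :
    (Q (Ioi t)).toReal ≤ 2 * exp (-(log 2 / (2 * m)) * t) := by
  refine le_two_mul_exp_of_le_half (antitone_measure_Ioi_toReal Q) (by positivity)
    (ENNReal.toReal_le_of_le_ofReal zero_le_one (by simpa using prob_le_one)) (fun s hs => ?_) ht
  have := mul_le_setIntegral_Ioi_of_antitone (antitone_measure_Ioi_toReal Q)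
    (fun _ _ => ENNReal.toReal_nonneg)
    ((integrableOn_measure_Ioi_toReal Q hQ0 hint).mono_set (Ioi_subset_Ioi hs))
    (by positivity : 0 ≤ 2 * m)
  nlinarith [hNBUE s hs]

lemma tendsto_measure_Ioi_toReal {P : ℕ → Measure ℝ} {ν : Measure ℝ}
    [∀ n, IsProbabilityMeasure (P n)] [IsProbabilityMeasure ν] {x : ℝ}
    (h : Tendsto (fun n => (P n (Iic x)).toReal) atTop (𝓝 (ν (Iic x)).toReal)) :
    Tendsto (fun n => (P n (Ioi x)).toReal) atTop (𝓝 (ν (Ioi x)).toReal) := by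
  simp only [← compl_Iic, ← measureReal_def, probReal_compl_eq_one_sub measurableSet_Iic]
  exact tendsto_const_nhds.sub h

lemma integral_rpow_eq_mul_setIntegral_measure_Ioi {Q : Measure ℝ} [IsFiniteMeasure Q]
    (hQ0 : Q (Iio 0) = 0) {r : ℝ} (hr : 0 < r)
    (hint : IntegrableOn (fun t => (Q (Ioi t)).toReal * t ^ (r - 1)) (Ioi 0)) :
    ∫ x, x ^ r ∂Q = r * ∫ t in Ioi 0, (Q (Ioi t)).toReal * t ^ (r - 1) := by
  have hnn : ∀ᵐ x ∂Q, 0 ≤ x := ae_iff.2 (by simpa [Iio] using hQ0)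
  have hlayer := lintegral_rpow_eq_lintegral_meas_lt_mul Q hnn aemeasurable_id hr
  have hint_nn : 0 ≤ᵐ[volume.restrict (Ioi 0)] fun t => (Q (Ioi t)).toReal * t ^ (r - 1) :=
    (ae_restrict_mem measurableSet_Ioi).mono fun t ht =>
      mul_nonneg ENNReal.toReal_nonneg (rpow_nonneg (le_of_lt ht) _)
  rw [integral_eq_lintegral_of_nonneg_ae (hnn.mono fun x hx => rpow_nonneg hx r)
      (continuous_rpow_const hr.le).aestronglyMeasurable, hlayer,
    integral_eq_lintegral_of_nonneg_ae hint_nn hint.aestronglyMeasurable,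
    ENNReal.toReal_mul, ENNReal.toReal_ofReal hr.le]
  congr 2
  refine setLIntegral_congr_fun measurableSet_Ioi fun t ht => ?_
  rw [ENNReal.ofReal_mul ENNReal.toReal_nonneg, ENNReal.ofReal_toReal (measure_ne_top _ _)]
  rfl

lemma integrableOn_exp_neg_mul_mul_rpow (C : ℝ) {c r : ℝ} (hc : 0 < c) (hr : 0 < r) :
    IntegrableOn (fun t => C * exp (-c * t) * t ^ (r - 1)) (Ioi 0) := by
  have h := integrableOn_rpow_mul_exp_neg_mul_rpow (p := 1) (s := r - 1) (by linarith) one_pos hc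
  simp only [rpow_one] at h
  exact IntegrableOn.congr_fun (h.const_mul C) (fun t _ => by ring) measurableSet_Ioi

section ExponentialTail

variable {C c r : ℝ}

lemma ae_norm_measure_Ioi_mul_rpow_le {Q : Measure ℝ}
    (htail : ∀ t > 0, (Q (Ioi t)).toReal ≤ C * exp (-c * t)) :
    ∀ᵐ t ∂volume.restrict (Ioi 0),
      ‖(Q (Ioi t)).toReal * t ^ (r - 1)‖ ≤ C * exp (-c * t) * t ^ (r - 1) := by
  refine (ae_restrict_mem measurableSet_Ioi).mono fun t ht => ?_
  have hpow : 0 ≤ t ^ (r - 1) := rpow_nonneg (le_of_lt ht) _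
  rw [Real.norm_of_nonneg (mul_nonneg ENNReal.toReal_nonneg hpow)]
  exact mul_le_mul_of_nonneg_right (htail t ht) hpow

lemma integrableOn_measure_Ioi_mul_rpow {Q : Measure ℝ} [IsFiniteMeasure Q]
    (hc : 0 < c) (hr : 0 < r) (htail : ∀ t > 0, (Q (Ioi t)).toReal ≤ C * exp (-c * t)) :
    IntegrableOn (fun t => (Q (Ioi t)).toReal * t ^ (r - 1)) (Ioi 0) := by
  refine (integrableOn_exp_neg_mul_mul_rpow C hc hr).mono' ?_ ?_
  · exact (antitone_measure_Ioi_toReal Q).measurable.aestronglyMeasurable.mul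
      ((continuousOn_id.rpow_const fun t ht => Or.inl (ne_of_gt ht)).aestronglyMeasurable
        measurableSet_Ioi)
  · exact ae_norm_measure_Ioi_mul_rpow_le htail

theorem tendsto_integral_rpow_of_tendsto_measure_Ioi {P : ℕ → Measure ℝ} {ν : Measure ℝ}
    [∀ n, IsFiniteMeasure (P n)] [IsFiniteMeasure ν]
    (hP0 : ∀ n, P n (Iio 0) = 0) (hν0 : ν (Iio 0) = 0) (hc : 0 < c) (hr : 0 < r)
    (htail : ∀ n, ∀ t > 0, (P n (Ioi t)).toReal ≤ C * exp (-c * t))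
    (hconv : ∀ t > 0, Tendsto (fun n => (P n (Ioi t)).toReal) atTop (𝓝 (ν (Ioi t)).toReal)) :
    Tendsto (fun n => ∫ x, x ^ r ∂P n) atTop (𝓝 (∫ x, x ^ r ∂ν)) := by
  have hνtail : ∀ t > 0, (ν (Ioi t)).toReal ≤ C * exp (-c * t) := fun t ht =>
    le_of_tendsto' (hconv t ht) fun n => htail n t ht
  have hint n := integrableOn_measure_Ioi_mul_rpow hc hr (htail n)
  have hdom : Tendsto (fun n => ∫ t in Ioi 0, (P n (Ioi t)).toReal * t ^ (r - 1)) atTop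
      (𝓝 (∫ t in Ioi 0, (ν (Ioi t)).toReal * t ^ (r - 1))) := by
    refine tendsto_integral_of_dominated_convergence _ (fun n => (hint n).aestronglyMeasurable)
      (integrableOn_exp_neg_mul_mul_rpow C hc hr)
      (fun n => ae_norm_measure_Ioi_mul_rpow_le (htail n)) ?_
    exact (ae_restrict_mem measurableSet_Ioi).mono fun t ht => (hconv t ht).mul_const _
  simp only [integral_rpow_eq_mul_setIntegral_measure_Ioi (hP0 _) hr (hint _),
    integral_rpow_eq_mul_setIntegral_measure_Ioi hν0 hr
      (integrableOn_measure_Ioi_mul_rpow hc hr hνtail)]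
  exact hdom.const_mul r

end ExponentialTail

theorem nbue_moments_converge_general
    (P : ℕ → Measure ℝ) (ν : Measure ℝ)
    [∀ n, IsProbabilityMeasure (P n)] [IsProbabilityMeasure ν]
    (hP0 : ∀ n, P n (Iio 0) = 0) (hν0 : ν (Iio 0) = 0)
    (hPint : ∀ n, Integrable id (P n))
    (μn : ℕ → ℝ)
    (M : ℝ) (hM : ∀ n, μn n ≤ M)
    (hNBUE : ∀ n, ∀ t ≥ (0:ℝ),
      ∫ x in Ioi t, ((P n) (Ioi x)).toReal ≤ μn n * ((P n) (Ioi t)).toReal)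
    (hconv : ∀ x : ℝ, Tendsto (fun n => ((P n) (Iic x)).toReal) atTop
      (nhds ((ν (Iic x)).toReal))) :
    ∀ r : ℝ, 0 < r →
      Tendsto (fun n => ∫ x, x ^ r ∂(P n)) atTop (nhds (∫ x, x ^ r ∂ν)) := by
  intro r hr
  set m := max M 1
  have hm : 0 < m := lt_max_of_lt_right one_pos
  have hNBUE_m : ∀ n, ∀ t ≥ (0 : ℝ),
      ∫ x in Ioi t, (P n (Ioi x)).toReal ≤ m * (P n (Ioi t)).toReal := fun n t ht =>
    (hNBUE n t ht).trans <|
      mul_le_mul_of_nonneg_right ((hM n).trans (le_max_left _ _)) ENNReal.toReal_nonneg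
  exact tendsto_integral_rpow_of_tendsto_measure_Ioi hP0 hν0 (by positivity) hr
    (fun n t ht =>
      measure_Ioi_toReal_le_two_mul_exp_of_nbue (hP0 n) (hPint n) hm (hNBUE_m n) ht.le)
    (fun t _ => tendsto_measure_Ioi_toReal (hconv t))

/-- If NBUE life distributions `Pₙ` with bounded means converge in distribution to a
continuous life distribution `ν` with finite mean, then for every `r > 0` the `r`-th
moments converge: `∫ x^r dPₙ → ∫ x^r dν`. -/
theorem nbue_moments_converge
    (P : ℕ → Measure ℝ) (ν : Measure ℝ)
    [∀ n, IsProbabilityMeasure (P n)] [IsProbabilityMeasure ν]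
    (hP0 : ∀ n, P n (Iio 0) = 0) (hν0 : ν (Iio 0) = 0)
    (hPint : ∀ n, Integrable id (P n)) (hνint : Integrable id ν)
    (μn : ℕ → ℝ) (hμn : ∀ n, μn n = ∫ x, x ∂P n)
    (M : ℝ) (hM : ∀ n, μn n ≤ M)
    (hNBUE : ∀ n, ∀ t ≥ (0:ℝ),
      ∫ x in Ioi t, ((P n) (Ioi x)).toReal ≤ μn n * ((P n) (Ioi t)).toReal)
    (hνcont : ∀ x : ℝ, ν {x} = 0)
    (hconv : ∀ x : ℝ, Tendsto (fun n => ((P n) (Iic x)).toReal) atTop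
      (nhds ((ν (Iic x)).toReal))) :
    ∀ r : ℝ, 0 < r →
      Tendsto (fun n => ∫ x, x ^ r ∂(P n)) atTop (nhds (∫ x, x ^ r ∂ν)) :=
  nbue_moments_converge_general P ν hP0 hν0 hPint μn M hM hNBUE hconv
end
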